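/- arXiv:1204.5958 — 9 statements merged into one kernel-verified Lean document; each statement's English description precedes it below -/
import Mathlib

section
/- Every M×N matrix Φ with unit-norm columns has worst-case coherence μ ≥ sqrt((N-M)/(M(N-1))), with equality if and only if Φ is an equiangular tight frame. -/
/-!
The Gram matrix `G = Φᴴ * Φ` and `Φ * Φᴴ` have the same Frobenius norm, because
`tr (G * G) = tr ((Φ * Φᴴ) * (Φ * Φᴴ))`. The diagonal of `G` is `1`, and the diagonal of `Φ * Φᴴ`
holds the squared row norms `aᵢ`, which sum to `N`. Splitting both norms into diagonal and
off-diagonal parts gives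
  `N + ∑_{j ≠ j'} ‖G j j'‖² = N² / M + ∑ᵢ (aᵢ - N / M)² + ∑_{i ≠ i'} ‖(Φ * Φᴴ) i i'‖²`,
and bounding the left side by `N + N (N - 1) μ²` gives the Welch bound. Equality holds exactly
when the three slack terms vanish: `‖G j j'‖ = μ` off the diagonal, the rows have equal norms,
and the rows are orthogonal.
-/

open Finset Matrix

theorem sum_sum_eq_sum_add_sum_offDiag {α β : Type*} [Fintype α] [AddCommMonoid β]
    (f : α → α → β) : ∑ i, ∑ j, f i j = ∑ i, f i i + ∑ p ∈ univ.offDiag, f p.1 p.2 := by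
  classical
  rw [← sum_product' univ univ f, ← diag_union_offDiag, sum_union (disjoint_diag_offDiag _)]
  congr 1
  simp [Finset.diag]

theorem sum_sq_sub_mean {ι : Type*} [Fintype ι] (a : ι → ℝ) :
    ∑ i, (a i - (∑ j, a j) / Fintype.card ι) ^ 2
      = ∑ i, a i ^ 2 - (∑ i, a i) ^ 2 / Fintype.card ι := by
  rcases isEmpty_or_nonempty ι with hι | hι
  · simp
  have hcard : (Fintype.card ι : ℝ) ≠ 0 := by positivity
  simp only [sub_sq, sum_add_distrib, sum_sub_distrib, ← sum_mul, ← mul_sum, sum_const,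
    card_univ, nsmul_eq_mul]
  field_simp
  ring

theorem sum_sq_sub_mean_eq_zero_iff {ι : Type*} [Fintype ι] {a : ι → ℝ} {s : ℝ}
    (hs : ∑ i, a i = s) : ∑ i, (a i - s / Fintype.card ι) ^ 2 = 0 ↔ ∀ i j, a i = a j := by
  subst hs
  rw [sum_eq_zero_iff_of_nonneg fun i _ => sq_nonneg _]
  simp only [mem_univ, true_implies, pow_eq_zero_iff two_ne_zero, sub_eq_zero]
  refine ⟨fun h i j => (h i).trans (h j).symm, fun h i => ?_⟩
  have : Nonempty ι := ⟨i⟩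
  have hcard : (Fintype.card ι : ℝ) ≠ 0 := by positivity
  rw [sum_congr rfl fun j _ => h j i, sum_const, card_univ, nsmul_eq_mul,
    mul_div_cancel_left₀ _ hcard]

theorem sum_sq_sub_sq_nonneg {α : Type*} {s : Finset α} {f : α → ℝ} {μ : ℝ}
    (hf : ∀ x ∈ s, 0 ≤ f x) (hfμ : ∀ x ∈ s, f x ≤ μ) : 0 ≤ ∑ x ∈ s, (μ ^ 2 - f x ^ 2) :=
  sum_nonneg fun x hx => sub_nonneg.2 (pow_le_pow_left₀ (hf x hx) (hfμ x hx) 2)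

theorem sum_sq_sub_sq_eq_zero_iff {α : Type*} {s : Finset α} {f : α → ℝ} {μ : ℝ}
    (hf : ∀ x ∈ s, 0 ≤ f x) (hfμ : ∀ x ∈ s, f x ≤ μ) :
    ∑ x ∈ s, (μ ^ 2 - f x ^ 2) = 0 ↔ ∀ x ∈ s, f x = μ := by
  rw [sum_eq_zero_iff_of_nonneg fun x hx =>
    sub_nonneg.2 (pow_le_pow_left₀ (hf x hx) (hfμ x hx) 2)]
  refine forall₂_congr fun x hx => ?_
  rw [sub_eq_zero, eq_comm, sq_eq_sq₀ (hf x hx) ((hf x hx).trans (hfμ x hx))]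

theorem sum_offDiag_norm_sq_eq_zero_iff {α E : Type*} [Fintype α] [NormedAddCommGroup E]
    (f : α → α → E) :
    ∑ p ∈ univ.offDiag, ‖f p.1 p.2‖ ^ 2 = 0 ↔ ∀ i j, i ≠ j → f i j = 0 := by
  rw [sum_eq_zero_iff_of_nonneg fun _ _ => sq_nonneg _]
  simp [mem_offDiag]

theorem Matrix.conjTranspose_mul_self_apply_self {𝕜 ι κ : Type*} [RCLike 𝕜] [Fintype ι]
    (Φ : Matrix ι κ 𝕜) (j : κ) : (Φᴴ * Φ) j j = ((∑ i, ‖Φ i j‖ ^ 2 : ℝ) : 𝕜) := by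
  simp [mul_apply, RCLike.conj_mul]

theorem Matrix.mul_conjTranspose_self_apply_self {𝕜 ι κ : Type*} [RCLike 𝕜] [Fintype κ]
    (Φ : Matrix ι κ 𝕜) (i : ι) : (Φ * Φᴴ) i i = ((∑ j, ‖Φ i j‖ ^ 2 : ℝ) : 𝕜) := by
  simp [mul_apply, RCLike.mul_conj]

variable {𝕜 ι κ : Type*} [RCLike 𝕜] [Fintype ι] [Fintype κ]

theorem Matrix.IsHermitian.trace_mul_self {H : Matrix ι ι 𝕜} (hH : H.IsHermitian) :
    (H * H).trace = ∑ i, ∑ j, ((‖H i j‖ ^ 2 : ℝ) : 𝕜) := by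
  simp only [trace, diag, mul_apply]
  refine sum_congr rfl fun i _ => sum_congr rfl fun j _ => ?_
  rw [← hH.apply j i, RCLike.star_def, RCLike.mul_conj]
  norm_cast

theorem Matrix.sum_norm_sq_conjTranspose_mul_self (Φ : Matrix ι κ 𝕜) :
    ∑ i, ∑ j, ‖(Φᴴ * Φ) i j‖ ^ 2 = ∑ i, ∑ j, ‖(Φ * Φᴴ) i j‖ ^ 2 := by
  have h : (Φᴴ * Φ * (Φᴴ * Φ)).trace = (Φ * Φᴴ * (Φ * Φᴴ)).trace := by
    rw [Matrix.mul_assoc, trace_mul_comm]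
    simp only [Matrix.mul_assoc]
  rw [(isHermitian_conjTranspose_mul_self Φ).trace_mul_self,
    (isHermitian_mul_conjTranspose_self Φ).trace_mul_self] at h
  exact_mod_cast h

theorem Matrix.sum_sum_norm_sq_eq_card (Φ : Matrix ι κ 𝕜)
    (hunit : ∀ j, ∑ i, ‖Φ i j‖ ^ 2 = 1) : ∑ i, ∑ j, ‖Φ i j‖ ^ 2 = Fintype.card κ := by
  rw [sum_comm]
  simp [hunit]

theorem welch_identity (Φ : Matrix ι κ 𝕜) (hunit : ∀ j, ∑ i, ‖Φ i j‖ ^ 2 = 1) :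
    (Fintype.card κ : ℝ) + ∑ p ∈ univ.offDiag, ‖(Φᴴ * Φ) p.1 p.2‖ ^ 2 =
      Fintype.card κ ^ 2 / Fintype.card ι
        + ∑ i, (∑ j, ‖Φ i j‖ ^ 2 - Fintype.card κ / Fintype.card ι) ^ 2
        + ∑ p ∈ univ.offDiag, ‖(Φ * Φᴴ) p.1 p.2‖ ^ 2 := by
  have hvar := sum_sq_sub_mean fun i => ∑ j, ‖Φ i j‖ ^ 2
  rw [sum_sum_norm_sq_eq_card Φ hunit] at hvar
  have h := sum_norm_sq_conjTranspose_mul_self Φ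
  rw [sum_sum_eq_sum_add_sum_offDiag, sum_sum_eq_sum_add_sum_offDiag] at h
  simp only [conjTranspose_mul_self_apply_self, mul_conjTranspose_self_apply_self,
    RCLike.norm_ofReal, hunit, abs_one, one_pow, sum_const, card_univ, nsmul_eq_mul, mul_one,
    sq_abs] at h
  linarith

theorem welch_defect (Φ : Matrix ι κ 𝕜) (hunit : ∀ j, ∑ i, ‖Φ i j‖ ^ 2 = 1) (μ : ℝ) :
    (Fintype.card κ : ℝ) * (Fintype.card κ - 1) * μ ^ 2
        - (Fintype.card κ ^ 2 / Fintype.card ι - Fintype.card κ) =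
      ∑ p ∈ univ.offDiag, ‖(Φ * Φᴴ) p.1 p.2‖ ^ 2
        + ∑ i, (∑ j, ‖Φ i j‖ ^ 2 - Fintype.card κ / Fintype.card ι) ^ 2
        + ∑ p ∈ univ.offDiag, (μ ^ 2 - ‖(Φᴴ * Φ) p.1 p.2‖ ^ 2) := by
  have h := welch_identity Φ hunit
  rw [sum_sub_distrib, sum_const, offDiag_card, card_univ, nsmul_eq_mul,
    Nat.cast_sub (Nat.le_mul_self _)]
  push_cast
  linarith

theorem welch_bound (Φ : Matrix ι κ 𝕜) (hunit : ∀ j, ∑ i, ‖Φ i j‖ ^ 2 = 1) {μ : ℝ}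
    (hle : ∀ j j', j ≠ j' → ‖(Φᴴ * Φ) j j'‖ ≤ μ) :
    (Fintype.card κ : ℝ) ^ 2 / Fintype.card ι - Fintype.card κ
      ≤ Fintype.card κ * (Fintype.card κ - 1) * μ ^ 2 := by
  have h := welch_defect Φ hunit μ
  have hslack := sum_sq_sub_sq_nonneg (s := univ.offDiag) (fun _ _ => norm_nonneg _)
    fun p hp => hle p.1 p.2 (mem_offDiag.1 hp).2.2
  have hvar : 0 ≤ ∑ i, (∑ j, ‖Φ i j‖ ^ 2 - Fintype.card κ / Fintype.card ι) ^ 2 := by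
    positivity
  have hoff : 0 ≤ ∑ p ∈ univ.offDiag, ‖(Φ * Φᴴ) p.1 p.2‖ ^ 2 := by positivity
  linarith

theorem welch_bound_eq_iff (Φ : Matrix ι κ 𝕜) (hunit : ∀ j, ∑ i, ‖Φ i j‖ ^ 2 = 1) {μ : ℝ}
    (hle : ∀ j j', j ≠ j' → ‖(Φᴴ * Φ) j j'‖ ≤ μ) :
    (Fintype.card κ : ℝ) * (Fintype.card κ - 1) * μ ^ 2
        = Fintype.card κ ^ 2 / Fintype.card ι - Fintype.card κ ↔
      (∀ i i', i ≠ i' → (Φ * Φᴴ) i i' = 0) ∧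
        (∀ i i', ∑ j, ‖Φ i j‖ ^ 2 = ∑ j, ‖Φ i' j‖ ^ 2) ∧
        ∀ j j', j ≠ j' → ‖(Φᴴ * Φ) j j'‖ = μ := by
  have hle' : ∀ p ∈ univ.offDiag, ‖(Φᴴ * Φ) p.1 p.2‖ ≤ μ :=
    fun p hp => hle p.1 p.2 (mem_offDiag.1 hp).2.2
  have hslack := sum_sq_sub_sq_nonneg (fun _ _ => norm_nonneg _) hle'
  have hvar : 0 ≤ ∑ i, (∑ j, ‖Φ i j‖ ^ 2 - Fintype.card κ / Fintype.card ι) ^ 2 := by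
    positivity
  have hoff : 0 ≤ ∑ p ∈ univ.offDiag, ‖(Φ * Φᴴ) p.1 p.2‖ ^ 2 := by positivity
  rw [← sub_eq_zero, welch_defect Φ hunit μ, add_eq_zero_iff_of_nonneg (by positivity) hslack,
    add_eq_zero_iff_of_nonneg hoff hvar, and_assoc,
    sum_sq_sub_mean_eq_zero_iff (sum_sum_norm_sq_eq_card Φ hunit),
    sum_sq_sub_sq_eq_zero_iff (fun _ _ => norm_nonneg _) hle']
  refine and_congr (sum_offDiag_norm_sq_eq_zero_iff (Φ * Φᴴ)) (and_congr Iff.rfl ?_)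
  simp [mem_offDiag]

/-- Welch bound. Every `M × N` matrix `Φ` with unit-norm columns has
worst-case coherence `μ ≥ √((N-M)/(M(N-1)))`, with equality iff `Φ` is an
equiangular tight frame (orthogonal equal-norm rows, unit-norm columns,
equal-modulus inner products between distinct columns). -/
theorem stmt_0 (M N : ℕ) (hM : 0 < M) (hMN : M ≤ N) (hN : 2 ≤ N)
    (Φ : Matrix (Fin M) (Fin N) ℂ)
    (hunit : ∀ n : Fin N, ∑ m : Fin M, ‖Φ m n‖ ^ 2 = 1)
    (μ : ℝ)
    (hμ : IsGreatest {t : ℝ | ∃ n n' : Fin N, n ≠ n' ∧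
        t = ‖∑ m : Fin M, (starRingEnd ℂ) (Φ m n) * Φ m n'‖} μ) :
    Real.sqrt (((N : ℝ) - M) / (M * ((N : ℝ) - 1))) ≤ μ ∧
      (μ = Real.sqrt (((N : ℝ) - M) / (M * ((N : ℝ) - 1))) ↔
        ((∀ m m' : Fin M, m ≠ m' →
            ∑ n : Fin N, Φ m n * (starRingEnd ℂ) (Φ m' n) = 0) ∧
         (∀ m m' : Fin M,
            ∑ n : Fin N, ‖Φ m n‖ ^ 2 = ∑ n : Fin N, ‖Φ m' n‖ ^ 2) ∧
         (∃ c : ℝ, ∀ n n' : Fin N, n ≠ n' →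
            ‖∑ m : Fin M, (starRingEnd ℂ) (Φ m n) * Φ m n'‖ = c))) := by
  obtain ⟨⟨n₀, n₁, hn₀₁, hμ_eq⟩, hμ_ub⟩ := hμ
  have hμ0 : 0 ≤ μ := hμ_eq ▸ norm_nonneg _
  have hle : ∀ n n', n ≠ n' → ‖(Φᴴ * Φ) n n'‖ ≤ μ := fun n n' h => hμ_ub ⟨n, n', h, rfl⟩
  have hbound := welch_bound Φ hunit hle
  have heq := welch_bound_eq_iff Φ hunit hle
  simp only [Fintype.card_fin] at hbound heq
  set t := ((N : ℝ) - M) / (M * ((N : ℝ) - 1)) with ht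
  have hM' : (0 : ℝ) < M := by exact_mod_cast hM
  have hN' : (1 : ℝ) < N := by exact_mod_cast hN
  have ht0 : 0 ≤ t := div_nonneg (sub_nonneg.2 (by exact_mod_cast hMN)) (by nlinarith)
  have hNN : (0 : ℝ) < N * (N - 1) := by nlinarith
  have htN : (N : ℝ) ^ 2 / M - N = N * (N - 1) * t := by
    rw [ht]
    field_simp [(sub_pos.2 hN').ne']
  rw [htN] at hbound heq
  refine ⟨(Real.sqrt_le_left hμ0).2 (le_of_mul_le_mul_left hbound hNN), ?_⟩
  rw [eq_comm, Real.sqrt_eq_iff_eq_sq ht0 hμ0, eq_comm, ← mul_right_inj' hNN.ne', heq]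
  refine and_congr Iff.rfl (and_congr Iff.rfl ⟨fun h => ⟨μ, h⟩, ?_⟩)
  rintro ⟨c, hc⟩ n n' hn
  rw [hμ_eq, hc n₀ n₁ hn₀₁]
  exact hc n n' hn
end

section
/- A Vandermonde matrix with M rows and N ≥ M columns is full spark (every M×M submatrix is invertible) if and only if its bases α_1,...,α_N are distinct. -/
/-! The `M × M` submatrices are exactly the Vandermonde matrices (transposed) of the
subfamilies `α ∘ f`, so each is invertible iff `α ∘ f` is injective. Since `2 ≤ M ≤ N`, any
two distinct columns `i ≠ j` occur together in some such submatrix, so all subfamilies are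
injective iff `α` is. -/

theorem Equiv.Perm.exists_apply_eq_and_apply_eq {β : Type*} [DecidableEq β] {a b i j : β}
    (hab : a ≠ b) (hij : i ≠ j) : ∃ σ : Equiv.Perm β, σ a = i ∧ σ b = j := by
  let τ := Equiv.swap a i
  have hτb : τ b ≠ i := by
    rw [← Equiv.swap_apply_left a i]
    exact τ.injective.ne hab.symm
  refine ⟨τ.trans (Equiv.swap (τ b) j), ?_, Equiv.swap_apply_left _ _⟩
  simp only [Equiv.trans_apply, τ, Equiv.swap_apply_left]
  exact Equiv.swap_apply_of_ne_of_ne hτb.symm hij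

theorem Function.injective_iff_forall_injective_comp {ι β γ : Type*} (e : ι ↪ β) {a b : ι}
    (hab : a ≠ b) (g : β → γ) :
    Function.Injective g ↔ ∀ f : ι → β, Function.Injective f → Function.Injective (g ∘ f) := by
  classical
  refine ⟨fun hg f hf => hg.comp hf, fun h i j hgij => ?_⟩
  by_contra hij
  obtain ⟨σ, hσa, hσb⟩ := Equiv.Perm.exists_apply_eq_and_apply_eq (e.injective.ne hab) hij
  have hσe : Function.Injective (σ ∘ e) := σ.injective.comp e.injective
  exact hab (h _ hσe (by simp [hσa, hσb, hgij]))

/-- A Vandermonde matrix `V[m,n] = (α n)^m` with `M` rows and `N ≥ M`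
columns is full spark (every `M × M` submatrix is invertible) if and only if its
bases `α 1, …, α N` are distinct. -/
theorem stmt_4 (M N : ℕ) (hM : 2 ≤ M) (hMN : M ≤ N) (α : Fin N → ℂ) :
    (∀ f : Fin M → Fin N, Function.Injective f →
        (Matrix.of fun m n : Fin M => α (f n) ^ (m : ℕ)).det ≠ 0) ↔
      Function.Injective α := by
  have h01 : (⟨0, by omega⟩ : Fin M) ≠ ⟨1, by omega⟩ := by simp
  rw [Function.injective_iff_forall_injective_comp (Fin.castLEEmb hMN) h01]
  refine forall₂_congr fun f _ => ?_
  change (Matrix.vandermonde (α ∘ f)).transpose.det ≠ 0 ↔ _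
  rw [Matrix.det_transpose, Matrix.det_vandermonde_ne_zero_iff]
end

section
/- Let N ≥ M and suppose the M×N matrix Φ formed by selecting the rows of the N×N discrete Fourier transform matrix indexed by a set ℳ ⊆ ℤ_N is full spark. Then the matrix formed by the rows indexed by the complement ℳᶜ is also full spark. -/
/-- The `N × N` discrete Fourier transform matrix, `ω^{mn}` with `ω = e^{-2πi/N}`. -/
noncomputable def dftMatrix (N : ℕ) [NeZero N] : Matrix (ZMod N) (ZMod N) ℂ :=
  Matrix.of fun m n : ZMod N =>
    Complex.exp (-(2 * Real.pi * Complex.I) * ((m.val : ℂ) * (n.val : ℂ)) / N)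

/-- The row-submatrix of the DFT with rows indexed by `S` is full spark: every square
submatrix obtained by choosing `|S|` distinct columns is invertible. -/
def DFTFullSparkRows (N : ℕ) [NeZero N] (S : Finset (ZMod N)) : Prop :=
  ∀ g : {m : ZMod N // m ∈ S} → ZMod N, Function.Injective g →
    (Matrix.of fun i j : {m : ZMod N // m ∈ S} =>
      dftMatrix N (i : ZMod N) (g j)).det ≠ 0

/-! Let `F` be the DFT matrix. If the minor of `F` with rows `ℳᶜ` and columns `J` were singular,
some nonzero `w` supported on `J` would have `u = F w` supported on `ℳ`. Since `F⁻¹ = Fᴴ / N`,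
the vector `w = F⁻¹ u` vanishes off `J`, so the minor of `Fᴴ` with rows `Jᶜ` and columns `ℳ`
kills the nonzero restriction of `u` to `ℳ`. That minor is the conjugate transpose of the minor
of `F` with rows `ℳ` and columns `Jᶜ`, which is square and invertible by the full spark
hypothesis. -/

open Function

namespace Matrix

variable {K R m n ι κ : Type*} [Fintype n] [Fintype ι]

lemma submatrix_mulVec_comp [NonUnitalNonAssocSemiring R] (A : Matrix m n R)
    (r : ι → m) {g : ι → n} (hg : Injective g) {w : n → R} (hw : ∀ x ∉ Set.range g, w x = 0) :
    A.submatrix r g *ᵥ (w ∘ g) = fun i ↦ (A *ᵥ w) (r i) := by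
  funext i
  simp only [mulVec, dotProduct, submatrix_apply]
  exact Fintype.sum_of_injective g hg _ _ (fun x hx ↦ by rw [hw x hx, mul_zero]) fun _ ↦ rfl

variable [Field K] [DecidableEq ι] [Fintype κ] [DecidableEq κ]

theorem det_submatrix_eq_zero_iff_exists_supported (A : Matrix m n K) (r : ι → m) {g : ι → n}
    (hg : Injective g) :
    (A.submatrix r g).det = 0 ↔
      ∃ w ≠ 0, (∀ x ∉ Set.range g, w x = 0) ∧ ∀ i, (A *ᵥ w) (r i) = 0 := by
  rw [← exists_mulVec_eq_zero_iff]
  constructor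
  · rintro ⟨v, hv0, hv⟩
    have hw : ∀ x ∉ Set.range g, extend g v 0 x = 0 := fun x hx ↦ extend_apply' _ _ _ hx
    have hwg : extend g v 0 ∘ g = v := funext (hg.extend_apply v 0)
    refine ⟨extend g v 0, fun h ↦ hv0 (by rw [← hwg, h]; rfl), hw, fun i ↦ ?_⟩
    rw [← hwg, submatrix_mulVec_comp A r hg hw] at hv
    exact congrFun hv i
  · rintro ⟨w, hw0, hw, hAw⟩
    refine ⟨w ∘ g, fun h ↦ hw0 (funext fun x ↦ ?_), ?_⟩
    · by_cases hx : x ∈ Set.range g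
      · obtain ⟨i, rfl⟩ := hx
        exact congrFun h i
      · exact hw x hx
    · rw [submatrix_mulVec_comp A r hg hw]
      exact funext hAw

theorem det_submatrix_eq_zero_of_mul_eq_one [DecidableEq n] {A B : Matrix n n K}
    (hBA : B * A = 1)
    {r g : ι → n} {r' g' : κ → n} (hg : Injective g) (hg' : Injective g')
    (hr' : Set.range r' ⊆ (Set.range g)ᶜ) (hrg' : (Set.range g')ᶜ ⊆ Set.range r)
    (h : (A.submatrix r g).det = 0) : (B.submatrix r' g').det = 0 := by
  obtain ⟨w, hw0, hw, hAw⟩ := (det_submatrix_eq_zero_iff_exists_supported A r hg).1 h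
  have hBAw : B *ᵥ (A *ᵥ w) = w := by rw [mulVec_mulVec, hBA, one_mulVec]
  refine (det_submatrix_eq_zero_iff_exists_supported B r' hg').2
    ⟨A *ᵥ w, ?_, fun x hx ↦ ?_, fun k ↦ ?_⟩
  · intro hAw0
    rw [hAw0, mulVec_zero] at hBAw
    exact hw0 hBAw.symm
  · obtain ⟨i, rfl⟩ := hrg' hx
    exact hAw i
  · rw [hBAw]
    exact hw _ (hr' ⟨k, rfl⟩)

end Matrix

open Matrix

lemma dftMatrix_apply (N : ℕ) [NeZero N] (m n : ZMod N) :
    dftMatrix N m n = ZMod.stdAddChar (-(m * n)) := by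
  have hneg : -(m * n) = ((-(m.val * n.val : ℤ) : ℤ) : ZMod N) := by
    push_cast
    simp only [ZMod.natCast_zmod_val]
  rw [hneg, ZMod.stdAddChar_coe, dftMatrix, of_apply]
  push_cast
  ring_nf

lemma dftMatrix_conjTranspose_mul_self (N : ℕ) [NeZero N] :
    (dftMatrix N)ᴴ * dftMatrix N = (N : ℂ) • 1 := by
  ext m n
  have hshift : ∀ k : ZMod N, k * m + -(k * n) = k * (m - n) := fun k ↦ by ring
  simp only [mul_apply, conjTranspose_apply, dftMatrix_apply, RCLike.star_def,
    ← AddChar.map_neg_eq_conj, neg_neg, ← AddChar.map_add_eq_mul, hshift,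
    AddChar.sum_mulShift _ (ZMod.isPrimitive_stdAddChar N), sub_eq_zero, ZMod.card]
  rw [Matrix.smul_apply, one_apply, smul_ite, smul_eq_mul, mul_one, smul_zero, Nat.cast_ite,
    Nat.cast_zero]

lemma inv_smul_dftMatrix_conjTranspose_mul_self (N : ℕ) [NeZero N] :
    ((N : ℂ)⁻¹ • (dftMatrix N)ᴴ) * dftMatrix N = 1 := by
  rw [smul_mul, dftMatrix_conjTranspose_mul_self, smul_smul,
    inv_mul_cancel₀ (Nat.cast_ne_zero.mpr (NeZero.ne N)), one_smul]

/-- If the rows of the `N × N` DFT indexed by `ℳ` form a full spark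
matrix, then so do the rows indexed by the complement `ℳᶜ`. -/
theorem stmt_5 (N : ℕ) [NeZero N] (ℳ : Finset (ZMod N))
    (h : DFTFullSparkRows N ℳ) : DFTFullSparkRows N ℳᶜ := by
  intro g hg hdet
  have hcard : Fintype.card ℳ = Fintype.card ↥(Set.range g)ᶜ := by
    rw [Fintype.card_compl_set, Set.card_range_of_injective hg, Fintype.card_coe,
      Fintype.card_coe, Finset.card_compl, ZMod.card]
    have := Finset.card_le_univ ℳ
    rw [ZMod.card] at this
    omega
  let e := Fintype.equivOfCardEq hcard
  have hdual := det_submatrix_eq_zero_of_mul_eq_one (inv_smul_dftMatrix_conjTranspose_mul_self N)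
    (r' := Subtype.val ∘ e) (g' := Subtype.val) hg Subtype.val_injective
    (by rintro _ ⟨k, rfl⟩; exact (e k).2) (fun x hx ↦ ⟨⟨x, by simpa using hx⟩, rfl⟩) hdet
  rw [submatrix_smul, Pi.smul_apply, Pi.smul_apply, det_smul, ← conjTranspose_submatrix,
    det_conjTranspose] at hdual
  have hN : ((N : ℂ)⁻¹) ^ Fintype.card ℳ ≠ 0 :=
    pow_ne_zero _ (inv_ne_zero (Nat.cast_ne_zero.2 (NeZero.ne N)))
  exact h (Subtype.val ∘ e) (Subtype.val_injective.comp e.injective)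
    (star_eq_zero.1 ((mul_eq_zero.1 hdual).resolve_left hN))
end

section
/- Let N ≥ M and suppose the M×N matrix formed by selecting the rows of the N×N DFT matrix indexed by ℳ ⊆ ℤ_N is full spark. Then for any integer A relatively prime to N, the matrix formed by the rows indexed by Aℳ = {Am : m ∈ ℳ} is also full spark, and likewise for any translate ℳ + b. -/
/-
Multiplying the row indices by a unit `A` of `ZMod N` amounts to permuting the columns,
since `ω^{(Am)n} = ω^{m(An)}`; translating them by `b` multiplies column `n` by the nonzero
scalar `ω^{bn}`. Neither operation affects the invertibility of square submatrices.
-/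

section
variable {N : ℕ} [NeZero N]

theorem dftMatrix_apply_eq_stdAddChar (m n : ZMod N) :
    dftMatrix N m n = ZMod.stdAddChar (-(m * n)) := by
  have hcast : -(m * n) = (↑(-(m.val * n.val : ℤ)) : ZMod N) := by
    push_cast
    simp only [ZMod.natCast_val, ZMod.cast_id', id]
  rw [hcast, ZMod.stdAddChar_coe, dftMatrix, Matrix.of_apply]
  congr 1
  push_cast
  ring

theorem dftMatrix_ne_zero (m n : ZMod N) : dftMatrix N m n ≠ 0 :=
  Complex.exp_ne_zero _

theorem dftMatrix_mul_left (a m n : ZMod N) :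
    dftMatrix N (a * m) n = dftMatrix N m (a * n) := by
  simp only [dftMatrix_apply_eq_stdAddChar]
  rw [mul_assoc, mul_left_comm]

theorem dftMatrix_add_left (m b n : ZMod N) :
    dftMatrix N (m + b) n = dftMatrix N b n * dftMatrix N m n := by
  simp only [dftMatrix_apply_eq_stdAddChar]
  rw [← AddChar.map_add_eq_mul]
  congr 1
  ring

theorem DFTFullSparkRows.image {S : Finset (ZMod N)} (hS : DFTFullSparkRows N S)
    {f σ : ZMod N → ZMod N} (hf : Function.Injective f) (hσ : Function.Injective σ)
    (c : ZMod N → ℂ) (hc : ∀ n, c n ≠ 0)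
    (hfσ : ∀ m n, dftMatrix N (f m) n = c n * dftMatrix N m (σ n)) :
    DFTFullSparkRows N (S.image f) := by
  intro g hg
  let e : {m // m ∈ S} ≃ {m // m ∈ S.image f} := Equiv.ofBijective
    (fun m => ⟨f m, Finset.mem_image_of_mem f m.2⟩)
    ⟨fun x y hxy => Subtype.ext (hf (congrArg Subtype.val hxy)), fun ⟨_, hy⟩ => by
      obtain ⟨x, hx, rfl⟩ := Finset.mem_image.mp hy
      exact ⟨⟨x, hx⟩, rfl⟩⟩
  have hsub : (Matrix.of fun i j : {m // m ∈ S.image f} => dftMatrix N i (g j)).submatrix e e =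
      (Matrix.of fun i j : {m // m ∈ S} => dftMatrix N i (σ (g (e j)))) *
        Matrix.diagonal fun j => c (g (e j)) := by
    ext i j
    rw [Matrix.mul_diagonal, Matrix.of_apply, mul_comm]
    exact hfσ i (g (e j))
  rw [← Matrix.det_submatrix_equiv_self e, hsub, Matrix.det_mul, Matrix.det_diagonal]
  exact mul_ne_zero (hS _ (hσ.comp (hg.comp e.injective)))
    (Finset.prod_ne_zero_iff.mpr fun j _ => hc _)

end

/-- If the rows of the `N × N` DFT indexed by `ℳ` form a full spark
matrix, then so do the rows indexed by `Aℳ` for any `A` coprime to `N`, and the rows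
indexed by any translate `ℳ + b`. -/
theorem stmt_6 (N : ℕ) [NeZero N] (ℳ : Finset (ZMod N))
    (h : DFTFullSparkRows N ℳ) (A : ℕ) (hA : Nat.Coprime A N) (b : ZMod N) :
    DFTFullSparkRows N (ℳ.image fun m => (A : ZMod N) * m) ∧
      DFTFullSparkRows N (ℳ.image fun m => m + b) := by
  have hA_inj : Function.Injective fun m : ZMod N => (A : ZMod N) * m :=
    (ZMod.unitOfCoprime A hA).isUnit.mul_right_injective
  exact ⟨h.image hA_inj hA_inj 1 (fun _ => one_ne_zero) fun m n => by
      rw [Pi.one_apply, one_mul, dftMatrix_mul_left],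
    h.image (add_left_injective b) Function.injective_id (dftMatrix N b)
      (dftMatrix_ne_zero b) fun m n => dftMatrix_add_left m b n⟩
end

section
/- Let N be a power of a prime p, and let P(z_1,...,z_M) be a polynomial with integer coefficients. If there exist N-th roots of unity ω_1,...,ω_M with P(ω_1,...,ω_M) = 0, then p divides P(1,...,1). -/
/-!
Fix a primitive `N`-th root of unity `ζ` and write `ω_m = ζ ^ e_m`. Then `ζ` is a root of the
integer polynomial `Q(z) = P(z ^ e_1, …, z ^ e_M)`, so its minimal polynomial `Φ_N` divides `Q`
in `ℤ[z]`. Evaluating at `z = 1` gives `Φ_N(1) ∣ Q(1) = P(1, …, 1)`, and `Φ_N(1) = p` when `N` is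
a power of `p` (`Φ_1(1) = 0` covers `N = 1`).
-/

open Polynomial

theorem MvPolynomial.aeval_aeval_X_pow {σ R A : Type*} [CommSemiring R] [CommSemiring A]
    [Algebra R A] (e : σ → ℕ) (x : A) (P : MvPolynomial σ R) :
    Polynomial.aeval x (MvPolynomial.aeval (fun m => (Polynomial.X : R[X]) ^ e m) P) =
      MvPolynomial.aeval (fun m => x ^ e m) P := by
  simp [MvPolynomial.comp_aeval_apply]

theorem Polynomial.cyclotomic_dvd_of_aeval_eq_zero {K : Type*} [Field K] [CharZero K] {n : ℕ}
    [NeZero n] {ζ : K} (hζ : IsPrimitiveRoot ζ n) {Q : ℤ[X]} (hQ : aeval ζ Q = 0) :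
    cyclotomic n ℤ ∣ Q := by
  rw [cyclotomic_eq_minpoly hζ (Nat.pos_of_neZero n)]
  exact minpoly.isIntegrallyClosed_dvd (hζ.isIntegral (Nat.pos_of_neZero n)) hQ

theorem MvPolynomial.eval_one_cyclotomic_dvd_of_aeval_eq_zero {σ K : Type*} [Field K]
    [CharZero K] {n : ℕ} [NeZero n] {ζ : K} (hζ : IsPrimitiveRoot ζ n) {ω : σ → K}
    (hω : ∀ m, ω m ^ n = 1) {P : MvPolynomial σ ℤ} (hP : MvPolynomial.aeval ω P = 0) :
    (cyclotomic n ℤ).eval 1 ∣ MvPolynomial.eval (fun _ => 1) P := by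
  choose e _ he using fun m => hζ.eq_pow_of_pow_eq_one (hω m)
  set Q : ℤ[X] := MvPolynomial.aeval (fun m => (Polynomial.X : ℤ[X]) ^ e m) P
  have hQζ : Polynomial.aeval ζ Q = 0 := by
    rw [MvPolynomial.aeval_aeval_X_pow, ← hP]
    simp only [he]
  have hQ1 : Q.eval 1 = MvPolynomial.eval (fun _ => 1) P := by
    simpa [MvPolynomial.coe_aeval_eq_eval] using MvPolynomial.aeval_aeval_X_pow e (1 : ℤ) P
  rw [← hQ1]
  exact eval_dvd (cyclotomic_dvd_of_aeval_eq_zero hζ hQζ)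

theorem Polynomial.prime_dvd_eval_one_cyclotomic_prime_pow {p : ℕ} (hp : p.Prime) (k : ℕ) :
    (p : ℤ) ∣ (cyclotomic (p ^ k) ℤ).eval 1 := by
  have : Fact p.Prime := ⟨hp⟩
  cases k with
  | zero => simp
  | succ k => rw [eval_one_cyclotomic_prime_pow]

theorem stmt_7_general (p N M : ℕ) (hp : p.Prime) (hN : ∃ k : ℕ, N = p ^ k)
    (P : MvPolynomial (Fin M) ℤ) (ω : Fin M → ℂ)
    (hω : ∀ m : Fin M, ω m ^ N = 1)
    (hP : MvPolynomial.aeval ω P = 0) :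
    (p : ℤ) ∣ MvPolynomial.eval (fun _ : Fin M => (1 : ℤ)) P := by
  obtain ⟨k, rfl⟩ := hN
  have : NeZero (p ^ k) := ⟨pow_ne_zero k hp.ne_zero⟩
  exact (prime_dvd_eval_one_cyclotomic_prime_pow hp k).trans <|
    MvPolynomial.eval_one_cyclotomic_dvd_of_aeval_eq_zero
      (Complex.isPrimitiveRoot_exp _ NeZero.out) hω hP

/-- Let `N` be a power of a prime `p`, and let `P(z_1,…,z_M)` be a
polynomial with integer coefficients. If there exist `N`-th roots of unity
`ω_1,…,ω_M` with `P(ω_1,…,ω_M) = 0`, then `p` divides `P(1,…,1)`. -/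
theorem stmt_7 (p N M : ℕ) (hp : p.Prime) (hN : ∃ k : ℕ, N = p ^ k) (hN0 : 0 < N)
    (P : MvPolynomial (Fin M) ℤ) (ω : Fin M → ℂ)
    (hω : ∀ m : Fin M, ω m ^ N = 1)
    (hP : MvPolynomial.aeval ω P = 0) :
    (p : ℤ) ∣ MvPolynomial.eval (fun _ : Fin M => (1 : ℤ)) P :=
  stmt_7_general p N M hp hN P ω hω hP
end

section
/- For any set of N ≥ 2 points on the unit sphere S² ⊂ ℝ³, the smallest angle between two distinct points is at most 2·arccos(1 − 2/N). -/
/-!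
Around each point `p i` place the spherical sector of half-angle `γ`: the cone of half-angle `γ`
about `p i`, cut out of the unit ball. Its volume is `(2π/3)(1 - cos γ)`, a third of the area of
its cap. If all pairwise angles exceeded `2γ`, the triangle inequality for angles would make these
sectors disjoint, so `N (2π/3)(1 - cos γ) ≤ 4π/3`, i.e. `cos γ ≥ 1 - 2/N`. When every pairwise
angle exceeds `2 arccos (1 - 2/N)`, this fails for `γ` slightly larger than `arccos (1 - 2/N)`.
-/

open MeasureTheory Real Set InnerProductGeometry Filter Topology Module
open scoped RealInnerProductSpace

lemma measurableSet_setOf_norm_snd_le {s : Set ℝ} (hs : MeasurableSet s) {g : ℝ → ℝ}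
    (hg : Measurable g) : MeasurableSet {q : ℝ × ℂ | q.1 ∈ s ∧ ‖q.2‖ ≤ g q.1} :=
  (hs.preimage measurable_fst).inter
    (measurableSet_le measurable_snd.norm (hg.comp measurable_fst))

lemma volume_setOf_norm_snd_le {s : Set ℝ} (hs : MeasurableSet s) {g : ℝ → ℝ}
    (hg : Measurable g) (hg0 : ∀ z ∈ s, 0 ≤ g z) :
    volume {q : ℝ × ℂ | q.1 ∈ s ∧ ‖q.2‖ ≤ g q.1} =
      ∫⁻ z in s, ENNReal.ofReal (π * g z ^ 2) := by
  rw [Measure.volume_eq_prod, Measure.prod_apply (measurableSet_setOf_norm_snd_le hs hg),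
    ← lintegral_indicator hs]
  congr 1 with z
  by_cases hz : z ∈ s
  · have : Prod.mk z ⁻¹' {q : ℝ × ℂ | q.1 ∈ s ∧ ‖q.2‖ ≤ g q.1} = Metric.closedBall 0 (g z) := by
      ext w; simp [hz]
    rw [this, indicator_of_mem hz, Complex.volume_closedBall, ENNReal.ofReal_mul pi_pos.le,
      mul_comm, ENNReal.ofReal_pow (hg0 z hz), ← ENNReal.ofReal_coe_nnreal, NNReal.coe_real_pi]
  · simp [hz]

lemma lintegral_Ioc_ofReal {a b : ℝ} (hab : a ≤ b) {f : ℝ → ℝ} (hf : Continuous f)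
    (hf0 : ∀ z ∈ Ioc a b, 0 ≤ f z) :
    ∫⁻ z in Ioc a b, ENNReal.ofReal (f z) = ENNReal.ofReal (∫ z in a..b, f z) := by
  rw [intervalIntegral.integral_of_le hab, ofReal_integral_eq_lintegral_ofReal
    (hf.integrableOn_Icc.mono_set Ioc_subset_Icc_self)
    ((ae_restrict_iff' measurableSet_Ioc).2 (ae_of_all _ hf0))]

lemma volume_cone {h k : ℝ} (hh : 0 ≤ h) (hk : 0 ≤ k) :
    volume {q : ℝ × ℂ | q.1 ∈ Ioc 0 h ∧ ‖q.2‖ ≤ q.1 * k} =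
      ENNReal.ofReal (π * k ^ 2 * h ^ 3 / 3) := by
  rw [volume_setOf_norm_snd_le (g := fun z => z * k) measurableSet_Ioc (by fun_prop)
    fun z hz => mul_nonneg hz.1.le hk]
  simp_rw [mul_pow, ← mul_assoc, mul_right_comm π]
  rw [lintegral_Ioc_ofReal hh (by fun_prop) fun z _ => by positivity,
    intervalIntegral.integral_const_mul, integral_pow]
  ring_nf

lemma volume_ballCap {c : ℝ} (hc₀ : -1 ≤ c) (hc : c ≤ 1) :
    volume {q : ℝ × ℂ | q.1 ∈ Ioc c 1 ∧ ‖q.2‖ ≤ √(1 - q.1 ^ 2)} =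
      ENNReal.ofReal (π * (2 - 3 * c + c ^ 3) / 3) := by
  rw [volume_setOf_norm_snd_le (g := fun z => √(1 - z ^ 2)) measurableSet_Ioc (by fun_prop)
      fun z _ => sqrt_nonneg _,
    lintegral_Ioc_ofReal hc (by fun_prop) fun z _ => by positivity]
  congr 1
  rw [intervalIntegral.integral_congr (g := fun z => π * (1 - z ^ 2)),
    intervalIntegral.integral_const_mul, intervalIntegral.integral_sub intervalIntegrable_const
      ((continuous_pow 2).intervalIntegrable _ _), intervalIntegral.integral_const, integral_pow]
  · simp only [smul_eq_mul]
    ring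
  · intro z hz
    rw [uIcc_of_le hc] at hz
    dsimp only
    rw [sq_sqrt (by nlinarith [hz.1, hz.2])]

def splitFinThree (v : EuclideanSpace ℝ (Fin 3)) : ℝ × ℂ := (v 0, ⟨v 1, v 2⟩)

lemma measurePreserving_splitFinThree : MeasurePreserving splitFinThree volume volume := by
  have hprod : MeasurePreserving (Prod.map (id : ℝ → ℝ)
      (fun g : Fin 2 → ℝ => Complex.measurableEquivRealProd.symm
        (MeasurableEquiv.piFinTwo (fun _ => ℝ) g))) volume volume :=
    (MeasurePreserving.id volume).prod
      (Complex.volume_preserving_equiv_real_prod.symm.comp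
        (volume_preserving_piFinTwo fun _ => ℝ))
  exact (hprod.comp (volume_preserving_piFinSuccAbove (fun _ : Fin 3 => ℝ) 0)).comp
    (EuclideanSpace.volume_preserving_symm_measurableEquiv_toLp (Fin 3))

lemma norm_sq_eq_splitFinThree (v : EuclideanSpace ℝ (Fin 3)) :
    ‖v‖ ^ 2 = (splitFinThree v).1 ^ 2 + ‖(splitFinThree v).2‖ ^ 2 := by
  rw [EuclideanSpace.norm_sq_eq, Fin.sum_univ_three, Complex.sq_norm, Complex.normSq_mk]
  simp only [splitFinThree, Real.norm_eq_abs, sq_abs]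
  ring

variable {E : Type*} [NormedAddCommGroup E] [InnerProductSpace ℝ E]

lemma exists_measurePreserving_cylindrical [FiniteDimensional ℝ E] [MeasurableSpace E]
    [BorelSpace E] (hE : finrank ℝ E = 3) {x : E} (hx : ‖x‖ = 1) :
    ∃ U : E → ℝ × ℂ, MeasurePreserving U volume volume ∧
      ∀ v, (U v).1 = ⟪x, v⟫ ∧ ‖v‖ ^ 2 = (U v).1 ^ 2 + ‖(U v).2‖ ^ 2 := by
  obtain ⟨b, hb⟩ : ∃ b : OrthonormalBasis (Fin 3) ℝ E, ∀ i ∈ ({0} : Set (Fin 3)), b i = x :=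
    Orthonormal.exists_orthonormalBasis_extension_of_card_eq (v := fun _ => x)
      (by simpa using hE)
      ⟨fun _ => hx, fun {i j} hij => absurd (Subsingleton.elim i j) hij⟩
  refine ⟨splitFinThree ∘ b.repr, measurePreserving_splitFinThree.comp b.measurePreserving_repr,
    fun v => ⟨?_, ?_⟩⟩
  · simp [splitFinThree, b.repr_apply_apply, hb 0 rfl]
  · rw [← b.repr.norm_map v]
    exact norm_sq_eq_splitFinThree _

def sphericalSector (x : E) (γ : ℝ) : Set E := {v | ‖v‖ ≤ 1 ∧ angle x v ≤ γ}

lemma sphericalSector_subset_closedBall (x : E) (γ : ℝ) :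
    sphericalSector x γ ⊆ Metric.closedBall 0 1 := fun _ hv => mem_closedBall_zero_iff.2 hv.1

lemma disjoint_sphericalSector {x y : E} {γ : ℝ} (h : 2 * γ < angle x y) :
    Disjoint (sphericalSector x γ) (sphericalSector y γ) := by
  refine disjoint_left.2 fun v hx hy => h.not_ge ?_
  calc angle x y ≤ angle x v + angle v y := angle_le_angle_add_angle x v y
    _ ≤ 2 * γ := by rw [angle_comm v y]; linarith [hx.2, hy.2]

lemma mem_sphericalSector {x v : E} {γ : ℝ} (hx : ‖x‖ = 1) (hγ₀ : 0 ≤ γ) (hγ : γ ≤ π)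
    (hv : ‖v‖ ≤ 1) (hpos : 0 < ⟪x, v⟫) (hcos : cos γ * ‖v‖ ≤ ⟪x, v⟫) :
    v ∈ sphericalSector x γ := by
  have hv0 : 0 < ‖v‖ := norm_pos_iff.2 fun h => by simp [h] at hpos
  refine ⟨hv, ?_⟩
  rw [angle, hx, one_mul, ← arccos_cos hγ₀ hγ]
  exact arccos_le_arccos ((le_div_iff₀ hv0).2 hcos)

variable [MeasurableSpace E] [BorelSpace E]

lemma measurableSet_sphericalSector (x : E) (γ : ℝ) : MeasurableSet (sphericalSector x γ) := by
  unfold sphericalSector angle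
  measurability

variable [FiniteDimensional ℝ E]

lemma volume_sphericalSector_ge (hE : finrank ℝ E = 3) {x : E} (hx : ‖x‖ = 1) {γ : ℝ}
    (hγ₀ : 0 ≤ γ) (hγ : γ < π / 2) :
    ENNReal.ofReal (2 * π / 3 * (1 - cos γ)) ≤ volume (sphericalSector x γ) := by
  obtain ⟨U, hU, hUx⟩ := exists_measurePreserving_cylindrical hE hx
  -- In cylindrical coordinates about `x`, the sector is a cone of height `cos γ` and slope
  -- `tan γ`, topped by the cap of the unit ball above height `cos γ`.
  set c := cos γ with hc
  have hc₀ : 0 < c := cos_pos_of_mem_Ioo ⟨by linarith, hγ⟩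
  have hc₁ : c ≤ 1 := cos_le_one γ
  have htan : 0 ≤ tan γ := tan_nonneg_of_nonneg_of_le_pi_div_two hγ₀ hγ.le
  set cone := {q : ℝ × ℂ | q.1 ∈ Ioc 0 c ∧ ‖q.2‖ ≤ q.1 * tan γ}
  set cap := {q : ℝ × ℂ | q.1 ∈ Ioc c 1 ∧ ‖q.2‖ ≤ √(1 - q.1 ^ 2)}
  have hcone : MeasurableSet cone :=
    measurableSet_setOf_norm_snd_le (g := fun z => z * tan γ) measurableSet_Ioc (by fun_prop)
  have hcap : MeasurableSet cap :=
    measurableSet_setOf_norm_snd_le (g := fun z => √(1 - z ^ 2)) measurableSet_Ioc (by fun_prop)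
  have hsub : U ⁻¹' (cone ∪ cap) ⊆ sphericalSector x γ := by
    intro v hv
    obtain ⟨hz, hnorm⟩ := hUx v
    simp only [mem_preimage, mem_union, mem_ofPred_eq, cone, cap] at hv
    set z := (U v).1
    set r := ‖(U v).2‖
    suffices ‖v‖ ≤ 1 ∧ 0 < z ∧ c * ‖v‖ ≤ z by
      rw [hz] at this
      exact mem_sphericalSector hx hγ₀ (by linarith [pi_pos]) this.1 this.2.1 this.2.2
    rcases hv with ⟨⟨hz₀, hzc⟩, hr⟩ | ⟨⟨hcz, hz₁⟩, hr⟩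
    · have hcr : c * r ≤ z * sin γ := by
        calc c * r ≤ c * (z * tan γ) := by gcongr
          _ = z * sin γ := by rw [tan_eq_sin_div_cos, ← hc]; field_simp
      have hcv : c * ‖v‖ ≤ z := by
        refine (pow_le_pow_iff_left₀ (by positivity) hz₀.le two_ne_zero).1 ?_
        have hsc : sin γ ^ 2 + c ^ 2 = 1 := by rw [hc]; exact sin_sq_add_cos_sq γ
        nlinarith [mul_self_le_mul_self (by positivity) hcr]
      exact ⟨le_of_mul_le_mul_left (by linarith) hc₀, hz₀, hcv⟩
    · have hr2 : r ^ 2 ≤ 1 - z ^ 2 := by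
        calc r ^ 2 ≤ √(1 - z ^ 2) ^ 2 := by gcongr
          _ = 1 - z ^ 2 := sq_sqrt (by nlinarith)
      have hv1 : ‖v‖ ≤ 1 := by nlinarith
      exact ⟨hv1, by linarith, by nlinarith⟩
  calc ENNReal.ofReal (2 * π / 3 * (1 - c))
      = volume cone + volume cap := by
        have hcap_nonneg : 0 ≤ 2 - 3 * c + c ^ 3 := by
          nlinarith [mul_nonneg (sq_nonneg (1 - c)) (by linarith : (0 : ℝ) ≤ 2 + c)]
        rw [volume_cone hc₀.le htan, volume_ballCap (by linarith) hc₁,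
          ← ENNReal.ofReal_add (by positivity) (by positivity)]
        congr 1
        rw [tan_eq_sin_div_cos, div_pow, sin_sq, ← hc]
        field_simp
        ring
    _ = volume (cone ∪ cap) :=
        (measure_union (disjoint_left.2 fun q hq hq' => hq.1.2.not_gt hq'.1.1) hcap).symm
    _ = volume (U ⁻¹' (cone ∪ cap)) :=
        (hU.measure_preimage (hcone.union hcap).nullMeasurableSet).symm
    _ ≤ volume (sphericalSector x γ) := measure_mono hsub

lemma card_mul_one_sub_cos_le_two (hE : finrank ℝ E = 3) {ι : Type*} [Fintype ι] {p : ι → E}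
    (hp : ∀ i, ‖p i‖ = 1) {γ : ℝ} (hγ₀ : 0 ≤ γ) (hγ : γ < π / 2)
    (hsep : Pairwise fun i j => 2 * γ < angle (p i) (p j)) :
    Fintype.card ι * (1 - cos γ) ≤ 2 := by
  have hball : ∑ i, volume (sphericalSector (p i) γ) ≤ ENNReal.ofReal (4 * π / 3) := by
    calc ∑ i, volume (sphericalSector (p i) γ) = volume (⋃ i, sphericalSector (p i) γ) := by
          rw [measure_iUnion (fun i j hij => disjoint_sphericalSector (hsep hij))
            fun i => measurableSet_sphericalSector _ _, tsum_fintype]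
      _ ≤ volume (Metric.closedBall (0 : E) 1) :=
          measure_mono (iUnion_subset fun i => sphericalSector_subset_closedBall _ _)
      _ = ENNReal.ofReal (4 * π / 3) := by
          rw [InnerProductSpace.volume_closedBall_of_dim_odd (k := 1) hE, hE]
          norm_num [Nat.doubleFactorial]
          ring_nf
  have hsectors : Fintype.card ι * ENNReal.ofReal (2 * π / 3 * (1 - cos γ)) ≤
      ∑ i, volume (sphericalSector (p i) γ) := by
    rw [← nsmul_eq_mul, ← Finset.card_univ, ← Finset.sum_const]
    exact Finset.sum_le_sum fun i _ => volume_sphericalSector_ge hE (hp i) hγ₀ hγ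
  have := hsectors.trans hball
  rw [← ENNReal.ofReal_natCast, ← ENNReal.ofReal_mul (by positivity),
    ENNReal.ofReal_le_ofReal_iff (by positivity)] at this
  nlinarith [pi_pos]

lemma exists_angle_le_two_mul_arccos (hE : finrank ℝ E = 3) {ι : Type*} [Fintype ι]
    [Nontrivial ι] (p : ι → E) (hp : ∀ i, ‖p i‖ = 1) :
    ∃ i j, i ≠ j ∧ angle (p i) (p j) ≤ 2 * arccos (1 - 2 / Fintype.card ι) := by
  set γ₀ := arccos (1 - 2 / Fintype.card ι)
  by_cases hπ : π ≤ 2 * γ₀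
  · obtain ⟨i, j, hij⟩ := exists_pair_ne ι
    exact ⟨i, j, hij, (angle_le_pi _ _).trans hπ⟩
  by_contra! hsep
  have hnear : ∀ᶠ γ in 𝓝[>] γ₀, γ < π / 2 ∧ ∀ i j, i ≠ j → 2 * γ < angle (p i) (p j) :=
    nhdsWithin_le_nhds <| (eventually_lt_nhds (by linarith)).and <|
      eventually_all.2 fun i => eventually_all.2 fun j => eventually_imp_distrib_left.2 fun hij =>
        (eventually_lt_nhds (show γ₀ < angle (p i) (p j) / 2 by linarith [hsep i j hij])).mono
          fun γ h => by linarith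
  obtain ⟨γ, ⟨hγ, hγsep⟩, hγ₀γ⟩ := (hnear.and self_mem_nhdsWithin).exists
  have hcard := card_mul_one_sub_cos_le_two hE hp ((arccos_nonneg _).trans hγ₀γ.le) hγ
    fun i j => hγsep i j
  have hN : (2 : ℝ) ≤ Fintype.card ι := by exact_mod_cast Fintype.one_lt_card
  have hfrac : 2 / (Fintype.card ι : ℝ) ≤ 1 := (div_le_one (by linarith)).2 hN
  have hfrac₀ : 0 ≤ 2 / (Fintype.card ι : ℝ) := by positivity
  have hcos : cos γ < 1 - 2 / Fintype.card ι := by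
    calc cos γ < cos γ₀ :=
          cos_lt_cos_of_nonneg_of_le_pi (arccos_nonneg _) (by linarith [pi_pos]) hγ₀γ
      _ = 1 - 2 / Fintype.card ι := cos_arccos (by linarith) (by linarith)
  have : 2 < (Fintype.card ι : ℝ) * (1 - cos γ) := by
    calc (2 : ℝ) = Fintype.card ι * (2 / Fintype.card ι) := by field_simp
      _ < Fintype.card ι * (1 - cos γ) := by gcongr; linarith
  linarith

/-- For any `N ≥ 2` points on the unit sphere `S² ⊂ ℝ³`, the smallest
angle between two distinct points is at most `2·arccos(1 − 2/N)`. -/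
theorem stmt_9 (N : ℕ) (hN : 2 ≤ N) (p : Fin N → EuclideanSpace ℝ (Fin 3))
    (hp : ∀ i, ‖p i‖ = 1) :
    ∃ i j : Fin N, i ≠ j ∧
      Real.arccos (inner ℝ (p i) (p j) : ℝ) ≤ 2 * Real.arccos (1 - 2 / N) := by
  have : Nontrivial (Fin N) := Fin.nontrivial_iff_two_le.2 hN
  obtain ⟨i, j, hij, h⟩ := exists_angle_le_two_mul_arccos finrank_euclideanSpace_fin p hp
  refine ⟨i, j, hij, ?_⟩
  simpa [angle, hp] using h
end

section
/- Let Φ be an M×N unit-norm frame with restricted isometry constant δ_{2K}. Then for any index n and any two subsets 𝒦, 𝒦' ⊆ {1,...,N} of size at most K with n ∈ 𝒦 and n ∉ 𝒦', the distance between the equal-weight averages satisfies ‖(1/|𝒦|)∑_{i∈𝒦} φ_i − (1/|𝒦'|)∑_{j∈𝒦'} φ_j‖ ≥ sqrt((1 − δ_{2K})/(K(K−1))). -/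
/-!
Test the lower restricted isometry bound on `x = 𝟙_𝒦 / |𝒦| - 𝟙_𝒦' / |𝒦'|`, which is supported on
`𝒦 ∪ 𝒦'` and hence `2K`-sparse, and whose image `Φ x` is the difference of the two averages.
With `a = |𝒦|`, `b = |𝒦'|`, `c = |𝒦 ∩ 𝒦'|` one has `‖x‖² = (a + b - 2c) / (ab)`, and
`ab ≤ (a + b - 2c) K (K - 1)`: either `b < a`, so `ab ≤ K (K - 1)`, or `a ≤ b`, and then
`n ∈ 𝒦 \ 𝒦'` forces `a + b - 2c ≥ 2` while `ab ≤ K² ≤ 2K (K - 1)`.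
-/

open Finset

theorem Nat.mul_le_sub_mul_mul_pred {a b c K : ℕ} (hK : 2 ≤ K) (hca : c < a) (hcb : c ≤ b)
    (haK : a ≤ K) (hbK : b ≤ K) : a * b ≤ (a + b - 2 * c) * (K * (K - 1)) := by
  obtain ⟨L, rfl⟩ : ∃ L, K = L + 2 := ⟨K - 2, by omega⟩
  rw [show L + 2 - 1 = L + 1 by omega]
  rcases lt_or_ge b a with hba | hab
  · have hd : 1 ≤ a + b - 2 * c := by omega
    calc a * b ≤ (L + 2) * (L + 1) := Nat.mul_le_mul haK (by omega)
      _ ≤ (a + b - 2 * c) * ((L + 2) * (L + 1)) := Nat.le_mul_of_pos_left _ hd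
  · have hd : 2 ≤ a + b - 2 * c := by omega
    calc a * b ≤ (L + 2) * (L + 2) := Nat.mul_le_mul haK hbK
      _ ≤ 2 * ((L + 2) * (L + 1)) := by nlinarith
      _ ≤ (a + b - 2 * c) * ((L + 2) * (L + 1)) := Nat.mul_le_mul_right _ hd

section AverageDifference

variable {ι : Type*} [DecidableEq ι]

noncomputable def averageDiff (s t : Finset ι) (i : ι) : ℝ :=
  (if i ∈ s then (#s : ℝ)⁻¹ else 0) - (if i ∈ t then (#t : ℝ)⁻¹ else 0)

theorem averageDiff_eq_zero_of_notMem_union {s t : Finset ι} {i : ι} (hi : i ∉ s ∪ t) :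
    averageDiff s t i = 0 := by
  rw [mem_union, not_or] at hi
  simp [averageDiff, hi.1, hi.2]

theorem sum_mul_averageDiff [Fintype ι] (f : ι → ℝ) (s t : Finset ι) :
    ∑ i, f i * averageDiff s t i = 1 / (#s : ℝ) * ∑ i ∈ s, f i - 1 / (#t : ℝ) * ∑ i ∈ t, f i := by
  simp only [averageDiff, mul_sub, sum_sub_distrib, mul_ite, mul_zero, sum_ite_mem, univ_inter,
    ← sum_mul]
  ring

theorem sum_averageDiff_sq [Fintype ι] {s t : Finset ι} (hs : s.Nonempty) (ht : t.Nonempty) :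
    ∑ i, averageDiff s t i ^ 2 = ((#s + #t - 2 * #(s ∩ t) : ℕ) : ℝ) / (#s * #t) := by
  have hcard : 2 * #(s ∩ t) ≤ #s + #t :=
    Nat.two_mul _ ▸ add_le_add (card_le_card inter_subset_left) (card_le_card inter_subset_right)
  have hterm : ∀ i, averageDiff s t i ^ 2 =
      ((if i ∈ s then (#s : ℝ)⁻¹ ^ 2 else 0) + (if i ∈ t then (#t : ℝ)⁻¹ ^ 2 else 0)) -
        (if i ∈ s ∩ t then 2 * ((#s : ℝ)⁻¹ * (#t : ℝ)⁻¹) else 0) := by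
    intro i
    by_cases his : i ∈ s <;> by_cases hit : i ∈ t <;> simp [averageDiff, his, hit]
    ring
  simp only [hterm, sum_sub_distrib, sum_add_distrib, sum_ite_mem, univ_inter, sum_const,
    nsmul_eq_mul]
  have hs0 : (#s : ℝ) ≠ 0 := by exact_mod_cast hs.card_pos.ne'
  have ht0 : (#t : ℝ) ≠ 0 := by exact_mod_cast ht.card_pos.ne'
  rw [Nat.cast_sub hcard]
  field_simp
  push_cast
  ring

theorem one_div_mul_pred_le_sum_averageDiff_sq [Fintype ι] {s t : Finset ι} {n : ι} {K : ℕ}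
    (hn : n ∈ s) (hn' : n ∉ t) (ht : t.Nonempty) (hK : 2 ≤ K) (hsK : #s ≤ K) (htK : #t ≤ K) :
    1 / ((K : ℝ) * (K - 1)) ≤ ∑ i, averageDiff s t i ^ 2 := by
  have hinter : #(s ∩ t) < #s :=
    card_lt_card ⟨inter_subset_left, fun h ↦ hn' (mem_inter.1 (h hn)).2⟩
  have hcard := Nat.mul_le_sub_mul_mul_pred hK hinter (card_le_card inter_subset_right) hsK htK
  have hK1 : ((K - 1 : ℕ) : ℝ) = K - 1 := by rw [Nat.cast_sub (by omega), Nat.cast_one]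
  have hKpos : (0 : ℝ) < K * (K - 1) := by
    rw [← hK1]; exact_mod_cast Nat.mul_pos (by omega) (by omega)
  have hst : (0 : ℝ) < #s * #t := by exact_mod_cast Nat.mul_pos (card_pos.2 ⟨n, hn⟩) ht.card_pos
  rw [sum_averageDiff_sq ⟨n, hn⟩ ht, div_le_div_iff₀ hKpos hst, one_mul, ← hK1]
  exact_mod_cast hcard

end AverageDifference

theorem stmt_12_general (M N K : ℕ) (Φ : Matrix (Fin M) (Fin N) ℝ)
    (δ : ℝ)
    (hRIP : ∀ x : Fin N → ℝ,
      (∃ s : Finset (Fin N), s.card ≤ 2 * K ∧ ∀ i ∉ s, x i = 0) →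
      (1 - δ) * (∑ i, x i ^ 2) ≤ ∑ m, (∑ i, Φ m i * x i) ^ 2 ∧
      ∑ m, (∑ i, Φ m i * x i) ^ 2 ≤ (1 + δ) * (∑ i, x i ^ 2))
    (n : Fin N) (𝒦 𝒦' : Finset (Fin N))
    (hn : n ∈ 𝒦) (hn' : n ∉ 𝒦')
    (h𝒦₂ : 2 ≤ 𝒦.card) (h𝒦K : 𝒦.card ≤ K)
    (h𝒦'₁ : 1 ≤ 𝒦'.card) (h𝒦'K : 𝒦'.card ≤ K) :
    Real.sqrt ((1 - δ) / ((K : ℝ) * ((K : ℝ) - 1))) ≤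
      Real.sqrt (∑ m : Fin M,
        ((1 / (𝒦.card : ℝ)) * ∑ i ∈ 𝒦, Φ m i
          - (1 / (𝒦'.card : ℝ)) * ∑ j ∈ 𝒦', Φ m j) ^ 2) := by
  set x := averageDiff 𝒦 𝒦'
  have hsparse : ∃ s : Finset (Fin N), #s ≤ 2 * K ∧ ∀ i ∉ s, x i = 0 :=
    ⟨𝒦 ∪ 𝒦', (card_union_le _ _).trans (by omega),
      fun _ hi ↦ averageDiff_eq_zero_of_notMem_union hi⟩
  have hRIPx := (hRIP x hsparse).1
  simp only [x, sum_mul_averageDiff] at hRIPx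
  have hK : (0 : ℝ) < K * (K - 1) := by
    have : (2 : ℝ) ≤ K := by exact_mod_cast h𝒦₂.trans h𝒦K
    nlinarith
  refine Real.sqrt_le_sqrt ?_
  rcases le_or_gt δ 1 with hδ | hδ
  · have hnorm : 1 / ((K : ℝ) * (K - 1)) ≤ ∑ i, x i ^ 2 :=
      one_div_mul_pred_le_sum_averageDiff_sq hn hn' (card_pos.1 h𝒦'₁) (h𝒦₂.trans h𝒦K) h𝒦K h𝒦'K
    calc (1 - δ) / (K * (K - 1)) = (1 - δ) * (1 / (K * (K - 1))) := by ring
      _ ≤ (1 - δ) * ∑ i, x i ^ 2 := mul_le_mul_of_nonneg_left hnorm (by linarith)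
      _ ≤ _ := hRIPx
  · exact (div_nonpos_of_nonpos_of_nonneg (by linarith) hK.le).trans (by positivity)

/-- If `Φ` is a unit-norm frame with restricted isometry constant
`δ` of order `2K`, then for any `n`, and any subsets `𝒦, 𝒦'` of sizes in `[2,K]`
and `[1,K]` respectively with `n ∈ 𝒦` and `n ∉ 𝒦'`, the distance between the
equal-weight averages of the corresponding columns is at least
`√((1 − δ)/(K(K−1)))`. -/
theorem stmt_12 (M N K : ℕ) (Φ : Matrix (Fin M) (Fin N) ℝ)
    (hunit : ∀ n : Fin N, ∑ m : Fin M, Φ m n ^ 2 = 1)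
    (δ : ℝ)
    (hRIP : ∀ x : Fin N → ℝ,
      (∃ s : Finset (Fin N), s.card ≤ 2 * K ∧ ∀ i ∉ s, x i = 0) →
      (1 - δ) * (∑ i, x i ^ 2) ≤ ∑ m, (∑ i, Φ m i * x i) ^ 2 ∧
      ∑ m, (∑ i, Φ m i * x i) ^ 2 ≤ (1 + δ) * (∑ i, x i ^ 2))
    (n : Fin N) (𝒦 𝒦' : Finset (Fin N))
    (hn : n ∈ 𝒦) (hn' : n ∉ 𝒦')
    (h𝒦₂ : 2 ≤ 𝒦.card) (h𝒦K : 𝒦.card ≤ K)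
    (h𝒦'₁ : 1 ≤ 𝒦'.card) (h𝒦'K : 𝒦'.card ≤ K) :
    Real.sqrt ((1 - δ) / ((K : ℝ) * ((K : ℝ) - 1))) ≤
      Real.sqrt (∑ m : Fin M,
        ((1 / (𝒦.card : ℝ)) * ∑ i ∈ 𝒦, Φ m i
          - (1 / (𝒦'.card : ℝ)) * ∑ j ∈ 𝒦', Φ m j) ^ 2) :=
  stmt_12_general M N K Φ δ hRIP n 𝒦 𝒦' hn hn' h𝒦₂ h𝒦K h𝒦'₁ h𝒦'K
end

section
/- For any matrix Φ with restricted orthogonality constant θ_K and restricted isometry constants δ_K, δ_{2K}, one has θ_K ≤ δ_{2K} ≤ 2θ_K + δ_1. -/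
/-!
For `θ_K ≤ δ_{2K}`: if `x, y` are `K`-sparse with disjoint supports, `a = ‖x‖`, `b = ‖y‖`,
then `b x ± a y` are `2K`-sparse with the same squared norm `2a²b²`, and
`‖Φ(bx + ay)‖² - ‖Φ(bx - ay)‖² = 4ab⟨Φx, Φy⟩`; the RIP bound on both terms gives
`|⟨Φx, Φy⟩| ≤ δ_{2K} ‖x‖‖y‖`.

For `δ_{2K} ≤ 2θ_K + δ_1`: if `x` has support `s` of size `t ≤ 2K`, write
`‖Φx‖² = Σ_{i ∈ s} x_i² ‖φ_i‖² + Σ_{i ≠ j} x_i x_j ⟨φ_i, φ_j⟩`. The diagonal part is within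
`δ_1 ‖x‖²` of `‖x‖²`. For the off-diagonal part, split `s = A ⊔ (s \ A)` with `|A| = ⌈t/2⌉`:
each cut `Σ_{i ∈ A, j ∉ A}` is `⟨Φx_A, Φx_{s∖A}⟩`, at most `θ_K ‖x_A‖‖x_{s∖A}‖ ≤ θ_K ‖x‖²/2`.
Averaging over all such `A`, every ordered pair `i ≠ j` is cut `C(t-2, a-1)` times out of
`C(t, a)` splittings, and `C(t, a) ≤ 4 C(t-2, a-1)`; so the off-diagonal part is at most
`2θ_K ‖x‖²`.
-/

open Finset Matrix

namespace Finset

variable {ι R : Type*} [DecidableEq ι] {s : Finset ι} {a : ℕ}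

theorem card_powersetCard_filter_mem_notMem (ha : 1 ≤ a) {i j : ι} (hi : i ∈ s) (hj : j ∈ s)
    (hij : i ≠ j) :
    #{A ∈ s.powersetCard a | i ∈ A ∧ j ∉ A} = (#s - 2).choose (a - 1) := by
  have hcard : #((s.erase i).erase j) = #s - 2 := by
    rw [card_erase_of_mem (mem_erase.2 ⟨hij.symm, hj⟩), card_erase_of_mem hi, Nat.sub_sub]
  rw [← hcard, ← card_powersetCard]
  refine card_bij' (fun A _ => A.erase i) (fun B _ => insert i B) ?_ ?_ ?_ ?_
  · intro A hA
    simp only [mem_filter, mem_powersetCard] at hA ⊢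
    obtain ⟨⟨hAs, hAa⟩, hiA, hjA⟩ := hA
    refine ⟨fun k hk => ?_, by rw [card_erase_of_mem hiA, hAa]⟩
    have hki := ne_of_mem_erase hk
    have hkA := mem_of_mem_erase hk
    exact mem_erase.2 ⟨fun h => hjA (h ▸ hkA), mem_erase.2 ⟨hki, hAs hkA⟩⟩
  · intro B hB
    simp only [mem_filter, mem_powersetCard] at hB ⊢
    have hiB : i ∉ B := fun h => ne_of_mem_erase (mem_of_mem_erase (hB.1 h)) rfl
    refine ⟨⟨insert_subset hi fun k hk => mem_of_mem_erase (mem_of_mem_erase (hB.1 hk)), ?_⟩,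
      mem_insert_self i B, ?_⟩
    · rw [card_insert_of_notMem hiB, hB.2]; omega
    · rintro hjB
      rcases mem_insert.1 hjB with h | h
      · exact hij h.symm
      · exact ne_of_mem_erase (hB.1 h) rfl
  · intro A hA
    exact insert_erase (mem_filter.1 hA).2.1
  · intro B hB
    exact erase_insert fun h => ne_of_mem_erase (mem_of_mem_erase ((mem_powersetCard.1 hB).1 h)) rfl

theorem sum_powersetCard_sum_product_sdiff [AddCommMonoid R] (ha : 1 ≤ a) (w : ι × ι → R) :
    ∑ A ∈ s.powersetCard a, ∑ p ∈ A ×ˢ (s \ A), w p =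
      (#s - 2).choose (a - 1) • ∑ p ∈ s.offDiag, w p := by
  have hcut : ∀ A ∈ s.powersetCard a,
      ∑ p ∈ A ×ˢ (s \ A), w p = ∑ p ∈ s.offDiag, if p.1 ∈ A ∧ p.2 ∉ A then w p else 0 := by
    intro A hA
    rw [← sum_filter]
    refine sum_congr (ext fun p => ?_) fun _ _ => rfl
    have := (mem_powersetCard.1 hA).1
    simp only [mem_product, mem_sdiff, mem_filter, mem_offDiag]
    constructor
    · rintro ⟨h1, h2, h3⟩; exact ⟨⟨this h1, h2, fun h => h3 (h ▸ h1)⟩, h1, h3⟩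
    · rintro ⟨⟨-, h2, -⟩, h1, h3⟩; exact ⟨h1, h2, h3⟩
  rw [sum_congr rfl hcut, sum_comm, smul_sum]
  refine sum_congr rfl fun p hp => ?_
  obtain ⟨hp1, hp2, hp12⟩ := mem_offDiag.1 hp
  rw [← sum_filter, sum_const, card_powersetCard_filter_mem_notMem ha hp1 hp2 hp12]

end Finset

theorem Nat.choose_mul_mul_sub (t : ℕ) {a : ℕ} (ha : 1 ≤ a) :
    t.choose a * (a * (t - a)) = (t - 2).choose (a - 1) * (t * t - t) := by
  -- double counting the cuts with unit weights
  have h := sum_powersetCard_sum_product_sdiff (s := range t) ha fun _ => 1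
  simp only [sum_const, smul_eq_mul, mul_one, card_product, card_range, offDiag_card] at h
  rwa [sum_congr rfl fun A hA => by
    rw [card_sdiff_of_subset (mem_powersetCard.1 hA).1, (mem_powersetCard.1 hA).2, card_range],
    sum_const, card_powersetCard, card_range, smul_eq_mul] at h

theorem Nat.mul_self_sub_le_four_mul_half_mul (t : ℕ) :
    t * t - t ≤ 4 * ((t + 1) / 2 * (t - (t + 1) / 2)) := by
  rcases Nat.even_or_odd t with ⟨k, rfl⟩ | ⟨k, rfl⟩
  · rw [show (k + k + 1) / 2 = k by omega, show k + k - k = k by omega]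
    zify [show k + k ≤ (k + k) * (k + k) by nlinarith]
    nlinarith
  · rw [show (2 * k + 1 + 1) / 2 = k + 1 by omega, show 2 * k + 1 - (k + 1) = k by omega]
    zify [show 2 * k + 1 ≤ (2 * k + 1) * (2 * k + 1) by nlinarith]
    nlinarith

namespace Matrix

variable {m ι R : Type*} [Fintype m] [Fintype ι]

theorem dotProduct_self_nonneg [Ring R] [LinearOrder R] [IsStrictOrderedRing R] (x : ι → R) :
    0 ≤ x ⬝ᵥ x :=
  sum_nonneg fun i _ => mul_self_nonneg (x i)

theorem dotProduct_eq_zero_of_disjoint [NonUnitalNonAssocSemiring R] {x y : ι → R}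
    (h : ∀ i, x i = 0 ∨ y i = 0) : x ⬝ᵥ y = 0 :=
  sum_eq_zero fun i _ => by rcases h i with h | h <;> simp [h]

theorem mulVec_dotProduct_mulVec_eq_sum [CommSemiring R] (Φ : Matrix m ι R) (x y : ι → R) :
    (Φ *ᵥ x) ⬝ᵥ (Φ *ᵥ y) = ∑ i, ∑ j, x i * y j * (Φᵀ * Φ) i j := by
  rw [← vecMul_transpose, ← dotProduct_mulVec, mulVec_mulVec]
  simp only [dotProduct, mulVec, mul_sum]
  exact sum_congr rfl fun i _ => sum_congr rfl fun j _ => by ring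

theorem mulVec_dotProduct_mulVec_eq_sum_product [CommSemiring R] (Φ : Matrix m ι R)
    {x y : ι → R} {A B : Finset ι} (hx : ∀ i ∉ A, x i = 0) (hy : ∀ j ∉ B, y j = 0) :
    (Φ *ᵥ x) ⬝ᵥ (Φ *ᵥ y) = ∑ p ∈ A ×ˢ B, x p.1 * y p.2 * (Φᵀ * Φ) p.1 p.2 := by
  rw [mulVec_dotProduct_mulVec_eq_sum, sum_product,
    ← sum_subset (subset_univ A) fun i _ hi => sum_eq_zero fun j _ => by simp [hx i hi]]
  exact sum_congr rfl fun i _ =>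
    (sum_subset (subset_univ B) fun j _ hj => by simp [hy j hj]).symm

variable [CommRing R]

theorem dotProduct_self_smul_add_smul (x y : ι → R) (hxy : x ⬝ᵥ y = 0) (a b : R) :
    (b • x + a • y) ⬝ᵥ (b • x + a • y) = b ^ 2 * (x ⬝ᵥ x) + a ^ 2 * (y ⬝ᵥ y) := by
  simp only [add_dotProduct, dotProduct_add, smul_dotProduct, dotProduct_smul, smul_eq_mul,
    dotProduct_comm y x, hxy]
  ring

theorem mulVec_dotProduct_mulVec_smul_add_smul_sub (Φ : Matrix m ι R) (x y : ι → R) (a b : R) :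
    (Φ *ᵥ (b • x + a • y)) ⬝ᵥ (Φ *ᵥ (b • x + a • y)) -
      (Φ *ᵥ (b • x + (-a) • y)) ⬝ᵥ (Φ *ᵥ (b • x + (-a) • y)) =
      4 * (a * b) * ((Φ *ᵥ x) ⬝ᵥ (Φ *ᵥ y)) := by
  simp only [mulVec_add, mulVec_smul, add_dotProduct, dotProduct_add, smul_dotProduct,
    dotProduct_smul, dotProduct_comm (Φ *ᵥ y) (Φ *ᵥ x), smul_eq_mul]
  ring

end Matrix

namespace CompressedSensing

section Sparse

variable {ι : Type*}

def IsSparse (K : ℕ) (x : ι → ℝ) : Prop :=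
  ∃ s : Finset ι, #s ≤ K ∧ ∀ i ∉ s, x i = 0

theorem IsSparse.smul {K : ℕ} {x : ι → ℝ} (hx : IsSparse K x) (c : ℝ) : IsSparse K (c • x) := by
  obtain ⟨s, hs, hx⟩ := hx
  exact ⟨s, hs, fun i hi => by simp [hx i hi]⟩

theorem IsSparse.add [DecidableEq ι] {K L : ℕ} {x y : ι → ℝ} (hx : IsSparse K x)
    (hy : IsSparse L y) : IsSparse (K + L) (x + y) := by
  obtain ⟨s, hs, hx⟩ := hx
  obtain ⟨t, ht, hy⟩ := hy
  refine ⟨s ∪ t, (card_union_le s t).trans (by omega), fun i hi => ?_⟩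
  rw [mem_union, not_or] at hi
  simp [hx i hi.1, hy i hi.2]

end Sparse

variable {m ι : Type*} [Fintype m] [Fintype ι] {Φ : Matrix m ι ℝ} {K : ℕ}

-- `θ_K` and `δ_K` are the least `θ` and `δ` for which these bounds hold.
def IsROCBound (Φ : Matrix m ι ℝ) (K : ℕ) (θ : ℝ) : Prop :=
  ∀ x y : ι → ℝ, IsSparse K x → IsSparse K y → (∀ i, x i = 0 ∨ y i = 0) →
    |(Φ *ᵥ x) ⬝ᵥ (Φ *ᵥ y)| ≤ θ * √(x ⬝ᵥ x) * √(y ⬝ᵥ y)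

def IsRIPBound (Φ : Matrix m ι ℝ) (K : ℕ) (δ : ℝ) : Prop :=
  ∀ x : ι → ℝ, IsSparse K x → |(Φ *ᵥ x) ⬝ᵥ (Φ *ᵥ x) - x ⬝ᵥ x| ≤ δ * (x ⬝ᵥ x)

theorem isROCBound_iff {θ : ℝ} :
    IsROCBound Φ K θ ↔ ∀ x y : ι → ℝ,
      (∃ s : Finset ι, s.card ≤ K ∧ ∀ i ∉ s, x i = 0) →
      (∃ s : Finset ι, s.card ≤ K ∧ ∀ i ∉ s, y i = 0) →
      (∀ i, x i = 0 ∨ y i = 0) →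
      |∑ k, (∑ i, Φ k i * x i) * (∑ i, Φ k i * y i)| ≤
        θ * Real.sqrt (∑ i, x i ^ 2) * Real.sqrt (∑ i, y i ^ 2) := by
  simp only [IsROCBound, IsSparse, dotProduct, mulVec, sq]

theorem isRIPBound_iff {δ : ℝ} :
    IsRIPBound Φ K δ ↔ ∀ x : ι → ℝ,
      (∃ s : Finset ι, s.card ≤ K ∧ ∀ i ∉ s, x i = 0) →
      (1 - δ) * (∑ i, x i ^ 2) ≤ ∑ k, (∑ i, Φ k i * x i) ^ 2 ∧
      ∑ k, (∑ i, Φ k i * x i) ^ 2 ≤ (1 + δ) * (∑ i, x i ^ 2) := by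
  simp only [IsRIPBound, IsSparse, dotProduct, mulVec, sq, abs_sub_le_iff]
  refine forall₂_congr fun x _ => ?_
  constructor <;> rintro ⟨h₁, h₂⟩ <;> constructor <;> linarith

/-- A negative orthogonality bound can only hold vacuously, so a least one is nonnegative. -/
theorem nonneg_of_isLeast_isROCBound {θ : ℝ} (h : IsLeast {θ | IsROCBound Φ K θ} θ) : 0 ≤ θ := by
  by_contra! hneg
  suffices IsROCBound Φ K (θ - 1) from absurd (h.2 this) (by linarith)
  intro x y hx hy hxy
  have hB := h.1 x y hx hy hxy
  have hxy0 := mul_nonneg (Real.sqrt_nonneg (x ⬝ᵥ x)) (Real.sqrt_nonneg (y ⬝ᵥ y))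
  nlinarith [abs_nonneg ((Φ *ᵥ x) ⬝ᵥ (Φ *ᵥ y))]

theorem IsRIPBound.isROCBound [DecidableEq ι] {δ : ℝ} (h : IsRIPBound Φ (2 * K) δ) :
    IsROCBound Φ K δ := by
  intro x y hx hy hxy
  set a := √(x ⬝ᵥ x)
  set b := √(y ⬝ᵥ y)
  have ha : a ^ 2 = x ⬝ᵥ x := Real.sq_sqrt (dotProduct_self_nonneg x)
  have hb : b ^ 2 = y ⬝ᵥ y := Real.sq_sqrt (dotProduct_self_nonneg y)
  rcases (mul_nonneg (Real.sqrt_nonneg _) (Real.sqrt_nonneg _) : 0 ≤ a * b).eq_or_lt with hab | hab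
  · have : x = 0 ∨ y = 0 := by
      rcases mul_eq_zero.1 hab.symm with h | h
      · exact .inl (dotProduct_self_eq_zero.1 (ha ▸ by rw [h]; ring))
      · exact .inr (dotProduct_self_eq_zero.1 (hb ▸ by rw [h]; ring))
    rcases this with rfl | rfl <;> simp [mul_assoc, ← hab]
  have hnorm : ∀ c : ℝ, c ^ 2 = a ^ 2 → (b • x + c • y) ⬝ᵥ (b • x + c • y) = 2 * (a * b) ^ 2 := by
    intro c hc
    rw [dotProduct_self_smul_add_smul x y (dotProduct_eq_zero_of_disjoint hxy), hc,
      ← ha, ← hb]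
    ring
  have hsparse : ∀ c : ℝ, IsSparse (2 * K) (b • x + c • y) := fun c =>
    two_mul K ▸ (hx.smul b).add (hy.smul c)
  have hu := h _ (hsparse a)
  have hv := h _ (hsparse (-a))
  rw [hnorm a rfl] at hu
  rw [hnorm (-a) (neg_sq a)] at hv
  have h4 : (0 : ℝ) < 4 * (a * b) := by positivity
  have hpol : |4 * (a * b) * ((Φ *ᵥ x) ⬝ᵥ (Φ *ᵥ y))| ≤ 4 * (a * b) * (δ * a * b) := by
    have : 4 * (a * b) * (δ * a * b) = 2 * (δ * (2 * (a * b) ^ 2)) := by ring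
    rw [← mulVec_dotProduct_mulVec_smul_add_smul_sub, this]
    rw [abs_le] at hu hv ⊢
    constructor <;> linarith
  rw [abs_mul, abs_of_pos h4] at hpol
  exact le_of_mul_le_mul_left hpol h4

theorem IsRIPBound.abs_gram_diag_sub_one_le [DecidableEq ι] {δ : ℝ} (h : IsRIPBound Φ 1 δ)
    (i : ι) : |(Φᵀ * Φ) i i - 1| ≤ δ := by
  have hi := h (Pi.single i 1) ⟨{i}, by simp, fun j hj => by simp_all⟩
  rw [mulVec_dotProduct_mulVec_eq_sum_product Φ (A := {i}) (B := {i}) (by simp_all)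
    (by simp_all)] at hi
  simpa using hi

theorem IsRIPBound.abs_sum_diag_sub_le [DecidableEq ι] {δ : ℝ} (h : IsRIPBound Φ 1 δ)
    {x : ι → ℝ} {s : Finset ι} (hx : ∀ i ∉ s, x i = 0) :
    |∑ i ∈ s, x i * x i * (Φᵀ * Φ) i i - x ⬝ᵥ x| ≤ δ * (x ⬝ᵥ x) := by
  have hxx : x ⬝ᵥ x = ∑ i ∈ s, x i * x i :=
    (sum_subset (subset_univ s) fun i _ hi => by simp [hx i hi]).symm
  rw [hxx, ← sum_sub_distrib, mul_sum]
  refine (abs_sum_le_sum_abs _ _).trans (sum_le_sum fun i _ => ?_)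
  rw [← mul_sub_one, abs_mul, abs_of_nonneg (mul_self_nonneg _), mul_comm]
  exact mul_le_mul_of_nonneg_right (h.abs_gram_diag_sub_one_le i) (mul_self_nonneg _)

theorem IsROCBound.abs_sum_product_sdiff_le [DecidableEq ι] {θ : ℝ} (h : IsROCBound Φ K θ)
    (hθ : 0 ≤ θ) {x : ι → ℝ} {s A : Finset ι} (hx : ∀ i ∉ s, x i = 0) (hAK : #A ≤ K)
    (hsAK : #(s \ A) ≤ K) :
    |∑ p ∈ A ×ˢ (s \ A), x p.1 * x p.2 * (Φᵀ * Φ) p.1 p.2| ≤ θ * (x ⬝ᵥ x) / 2 := by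
  set y := Set.indicator (A : Set ι) x
  set z := Set.indicator ((s \ A : Finset ι) : Set ι) x
  have hy : ∀ i ∉ A, y i = 0 := fun i hi => Set.indicator_of_notMem (mem_coe.not.2 hi) x
  have hz : ∀ i ∉ s \ A, z i = 0 := fun i hi => Set.indicator_of_notMem (mem_coe.not.2 hi) x
  have hyz : ∀ i, y i = 0 ∨ z i = 0 := fun i => by
    by_cases hi : i ∈ A
    · exact .inr (hz i fun h => (mem_sdiff.1 h).2 hi)
    · exact .inl (hy i hi)
  have hcut : ∑ p ∈ A ×ˢ (s \ A), x p.1 * x p.2 * (Φᵀ * Φ) p.1 p.2 = (Φ *ᵥ y) ⬝ᵥ (Φ *ᵥ z) := by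
    rw [mulVec_dotProduct_mulVec_eq_sum_product Φ hy hz]
    refine sum_congr rfl fun p hp => ?_
    rw [mem_product] at hp
    rw [show y p.1 = x p.1 from Set.indicator_of_mem (mem_coe.2 hp.1) x,
      show z p.2 = x p.2 from Set.indicator_of_mem (mem_coe.2 hp.2) x]
  have hnorm : y ⬝ᵥ y + z ⬝ᵥ z = x ⬝ᵥ x := by
    simp only [dotProduct, ← sum_add_distrib]
    refine sum_congr rfl fun i _ => ?_
    simp only [y, z, Set.indicator_apply, coe_sdiff, Set.mem_sdiff, mem_coe]
    by_cases hiA : i ∈ A <;> by_cases his : i ∈ s <;> simp [hiA, his, hx i]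
  rw [hcut, ← hnorm]
  refine (h y z ⟨A, hAK, hy⟩ ⟨s \ A, hsAK, hz⟩ hyz).trans ?_
  have hy2 := Real.sq_sqrt (dotProduct_self_nonneg y)
  have hz2 := Real.sq_sqrt (dotProduct_self_nonneg z)
  rw [mul_assoc, mul_div_assoc]
  refine mul_le_mul_of_nonneg_left ?_ hθ
  nlinarith [sq_nonneg (√(y ⬝ᵥ y) - √(z ⬝ᵥ z))]

theorem IsROCBound.abs_sum_offDiag_le [DecidableEq ι] {θ : ℝ} (h : IsROCBound Φ K θ)
    (hθ : 0 ≤ θ) {x : ι → ℝ} {s : Finset ι} (hx : ∀ i ∉ s, x i = 0) (hs : #s ≤ 2 * K) :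
    |∑ p ∈ s.offDiag, x p.1 * x p.2 * (Φᵀ * Φ) p.1 p.2| ≤ 2 * θ * (x ⬝ᵥ x) := by
  have hxx := dotProduct_self_nonneg x
  rcases Nat.lt_or_ge #s 2 with hs2 | hs2
  · have : s.offDiag = ∅ := card_eq_zero.1 <| by
      rw [offDiag_card]; exact Nat.sub_eq_zero_of_le (by nlinarith)
    simp [this]
    positivity
  set t := #s
  set a := (t + 1) / 2
  have ha : 1 ≤ a := by omega
  set c := (t - 2).choose (a - 1)
  have hc : 0 < c := Nat.choose_pos (by omega)
  have hchoose : t.choose a ≤ 4 * c := by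
    refine Nat.le_of_mul_le_mul_right ?_ (Nat.mul_pos ha (by omega) : 0 < a * (t - a))
    calc t.choose a * (a * (t - a)) = c * (t * t - t) := Nat.choose_mul_mul_sub t ha
      _ ≤ c * (4 * (a * (t - a))) := Nat.mul_le_mul_left c (Nat.mul_self_sub_le_four_mul_half_mul t)
      _ = 4 * c * (a * (t - a)) := by ring
  have hcut : ∀ A ∈ s.powersetCard a,
      |∑ p ∈ A ×ˢ (s \ A), x p.1 * x p.2 * (Φᵀ * Φ) p.1 p.2| ≤ θ * (x ⬝ᵥ x) / 2 := by
    intro A hA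
    obtain ⟨hAs, hAa⟩ := mem_powersetCard.1 hA
    exact h.abs_sum_product_sdiff_le hθ hx (by omega) (by rw [card_sdiff_of_subset hAs]; omega)
  refine le_of_mul_le_mul_left ?_ (by exact_mod_cast hc : (0 : ℝ) < c)
  calc (c : ℝ) * |∑ p ∈ s.offDiag, x p.1 * x p.2 * (Φᵀ * Φ) p.1 p.2|
      = |∑ A ∈ s.powersetCard a, ∑ p ∈ A ×ˢ (s \ A), x p.1 * x p.2 * (Φᵀ * Φ) p.1 p.2| := by
        rw [sum_powersetCard_sum_product_sdiff ha, nsmul_eq_mul, abs_mul, Nat.abs_cast]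
    _ ≤ t.choose a * (θ * (x ⬝ᵥ x) / 2) := by
        refine (abs_sum_le_sum_abs _ _).trans ?_
        simpa using sum_le_card_nsmul _ _ _ hcut
    _ ≤ (4 * c : ℕ) * (θ * (x ⬝ᵥ x) / 2) := by gcongr
    _ = c * (2 * θ * (x ⬝ᵥ x)) := by push_cast; ring

theorem IsROCBound.isRIPBound_two_mul [DecidableEq ι] {θ δ : ℝ} (hθ : IsROCBound Φ K θ)
    (hθ₀ : 0 ≤ θ) (hδ : IsRIPBound Φ 1 δ) : IsRIPBound Φ (2 * K) (2 * θ + δ) := by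
  rintro x ⟨s, hs, hx⟩
  have hsplit : (Φ *ᵥ x) ⬝ᵥ (Φ *ᵥ x) = ∑ i ∈ s, x i * x i * (Φᵀ * Φ) i i +
      ∑ p ∈ s.offDiag, x p.1 * x p.2 * (Φᵀ * Φ) p.1 p.2 := by
    rw [mulVec_dotProduct_mulVec_eq_sum_product Φ hx hx, ← diag_union_offDiag,
      sum_union (disjoint_diag_offDiag s), sum_diag]
  have hdiag := hδ.abs_sum_diag_sub_le hx
  have hoff := hθ.abs_sum_offDiag_le hθ₀ hx hs
  rw [hsplit, add_sub_right_comm]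
  exact (abs_add_le _ _).trans (by linarith)

end CompressedSensing

open CompressedSensing in
theorem stmt_13_general (M N K : ℕ) (Φ : Matrix (Fin M) (Fin N) ℝ)
    (θK δ2K δ1 : ℝ)
    (hθ : IsLeast {θ : ℝ | ∀ x y : Fin N → ℝ,
        (∃ s : Finset (Fin N), s.card ≤ K ∧ ∀ i ∉ s, x i = 0) →
        (∃ s : Finset (Fin N), s.card ≤ K ∧ ∀ i ∉ s, y i = 0) →
        (∀ i, x i = 0 ∨ y i = 0) →
        |∑ m, (∑ i, Φ m i * x i) * (∑ i, Φ m i * y i)| ≤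
          θ * Real.sqrt (∑ i, x i ^ 2) * Real.sqrt (∑ i, y i ^ 2)} θK)
    (hδ2 : IsLeast {δ : ℝ | ∀ x : Fin N → ℝ,
        (∃ s : Finset (Fin N), s.card ≤ 2 * K ∧ ∀ i ∉ s, x i = 0) →
        (1 - δ) * (∑ i, x i ^ 2) ≤ ∑ m, (∑ i, Φ m i * x i) ^ 2 ∧
        ∑ m, (∑ i, Φ m i * x i) ^ 2 ≤ (1 + δ) * (∑ i, x i ^ 2)} δ2K)
    (hδ1 : IsLeast {δ : ℝ | ∀ x : Fin N → ℝ,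
        (∃ s : Finset (Fin N), s.card ≤ 1 ∧ ∀ i ∉ s, x i = 0) →
        (1 - δ) * (∑ i, x i ^ 2) ≤ ∑ m, (∑ i, Φ m i * x i) ^ 2 ∧
        ∑ m, (∑ i, Φ m i * x i) ^ 2 ≤ (1 + δ) * (∑ i, x i ^ 2)} δ1) :
    θK ≤ δ2K ∧ δ2K ≤ 2 * θK + δ1 := by
  simp only [← isROCBound_iff, ← isRIPBound_iff] at hθ hδ2 hδ1
  exact ⟨hθ.2 hδ2.1.isROCBound,
    hδ2.2 (hθ.1.isRIPBound_two_mul (nonneg_of_isLeast_isROCBound hθ) hδ1.1)⟩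

/-- For any matrix `Φ`, the restricted orthogonality constant `θ_K`
and restricted isometry constants `δ_{2K}`, `δ_1` satisfy
`θ_K ≤ δ_{2K} ≤ 2θ_K + δ_1`. -/
theorem stmt_13 (M N K : ℕ) (hK : 1 ≤ K) (Φ : Matrix (Fin M) (Fin N) ℝ)
    (θK δ2K δ1 : ℝ)
    (hθ : IsLeast {θ : ℝ | ∀ x y : Fin N → ℝ,
        (∃ s : Finset (Fin N), s.card ≤ K ∧ ∀ i ∉ s, x i = 0) →
        (∃ s : Finset (Fin N), s.card ≤ K ∧ ∀ i ∉ s, y i = 0) →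
        (∀ i, x i = 0 ∨ y i = 0) →
        |∑ m, (∑ i, Φ m i * x i) * (∑ i, Φ m i * y i)| ≤
          θ * Real.sqrt (∑ i, x i ^ 2) * Real.sqrt (∑ i, y i ^ 2)} θK)
    (hδ2 : IsLeast {δ : ℝ | ∀ x : Fin N → ℝ,
        (∃ s : Finset (Fin N), s.card ≤ 2 * K ∧ ∀ i ∉ s, x i = 0) →
        (1 - δ) * (∑ i, x i ^ 2) ≤ ∑ m, (∑ i, Φ m i * x i) ^ 2 ∧
        ∑ m, (∑ i, Φ m i * x i) ^ 2 ≤ (1 + δ) * (∑ i, x i ^ 2)} δ2K)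
    (hδ1 : IsLeast {δ : ℝ | ∀ x : Fin N → ℝ,
        (∃ s : Finset (Fin N), s.card ≤ 1 ∧ ∀ i ∉ s, x i = 0) →
        (1 - δ) * (∑ i, x i ^ 2) ≤ ∑ m, (∑ i, Φ m i * x i) ^ 2 ∧
        ∑ m, (∑ i, Φ m i * x i) ^ 2 ≤ (1 + δ) * (∑ i, x i ^ 2)} δ1) :
    θK ≤ δ2K ∧ δ2K ≤ 2 * θK + δ1 :=
  stmt_13_general M N K Φ θK δ2K δ1 hθ hδ2 hδ1
end

section
/- Let G be the Paley graph of prime order p ≡ 1 (mod 4). Then the clique number satisfies ω(G) < √p. -/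
/-!
If every difference of two elements of `s` is a square and `n` is a nonsquare, then the sums
`a + n * b` with `a, b ∈ s` are pairwise distinct: from `a + n * b = a' + n * b'` with `b ≠ b'`
we would get `n = (a - a') / (b' - b)`, a quotient of squares. Hence `#s ^ 2 ≤ q` in a field of
order `q`, and for `q = p` prime the bound is strict because `√p` is irrational. In the Paley
graph the differences within a clique are squares, and `ℤ_p` has a nonsquare since `p` is odd.
-/

section FiniteField

variable {F : Type*} [Field F]

theorem Set.injOn_add_mul_of_pairwise_isSquare_sub {n : F} (hn : ¬IsSquare n) {s : Set F}
    (hs : s.Pairwise fun a b => IsSquare (a - b)) :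
    Set.InjOn (fun q : F × F => q.1 + n * q.2) (s ×ˢ s) := by
  have hsq : ∀ a ∈ s, ∀ b ∈ s, IsSquare (a - b) := by
    intro a ha b hb
    rcases eq_or_ne a b with rfl | hab
    · simp
    · exact hs ha hb hab
  rintro ⟨a, b⟩ ⟨ha, hb⟩ ⟨a', b'⟩ ⟨ha', hb'⟩ h
  have key : a - a' = n * (b' - b) := by linear_combination h
  obtain rfl | hbb := eq_or_ne b b'
  · simpa [sub_eq_zero] using key
  · refine absurd ?_ hn
    rw [eq_div_of_mul_eq (sub_ne_zero.mpr hbb.symm) key.symm]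
    exact (hsq a ha a' ha').div (hsq b' hb' b hb)

theorem Finset.card_sq_le_of_pairwise_isSquare_sub [Fintype F] {n : F} (hn : ¬IsSquare n)
    {t : Finset F} (ht : (t : Set F).Pairwise fun a b => IsSquare (a - b)) :
    t.card ^ 2 ≤ Fintype.card F := by
  rw [sq, ← Finset.card_product, ← Finset.card_univ]
  refine Finset.card_le_card_of_injOn (fun q : F × F => q.1 + n * q.2)
    (fun _ _ => Finset.mem_univ _) ?_
  rw [Finset.coe_product]
  exact Set.injOn_add_mul_of_pairwise_isSquare_sub hn ht

end FiniteField

theorem ZMod.card_lt_sqrt_of_pairwise_isSquare_sub {p : ℕ} [Fact p.Prime] (hp2 : p ≠ 2)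
    {t : Finset (ZMod p)} (ht : (t : Set (ZMod p)).Pairwise fun a b => IsSquare (a - b)) :
    (t.card : ℝ) < Real.sqrt p := by
  obtain ⟨n, hn⟩ : ∃ n : ZMod p, ¬IsSquare n :=
    FiniteField.exists_nonsquare (by rwa [ZMod.ringChar_zmod_n])
  have hle : t.card ^ 2 ≤ p := by
    simpa using Finset.card_sq_le_of_pairwise_isSquare_sub hn ht
  refine lt_of_le_of_ne (Real.le_sqrt_of_sq_le (by exact_mod_cast hle)) ?_
  exact ((Fact.out : p.Prime).irrational_sqrt.ne_nat _).symm

/-- The Paley graph of prime order `p ≡ 1 (mod 4)` — the graph on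
`ℤ_p` with `x ~ y` iff `x − y` is a nonzero quadratic residue — has clique number
strictly less than `√p`: every clique has fewer than `√p` vertices. -/
theorem stmt_16 (p : ℕ) (hp : p.Prime) (hp4 : p % 4 = 1)
    (G : SimpleGraph (ZMod p))
    (hG : ∀ x y : ZMod p, G.Adj x y ↔ x ≠ y ∧ IsSquare (x - y)) :
    ∀ t : Finset (ZMod p), G.IsClique (t : Set (ZMod p)) →
      (t.card : ℝ) < Real.sqrt p := by
  intro t ht
  have : Fact p.Prime := ⟨hp⟩
  exact ZMod.card_lt_sqrt_of_pairwise_isSquare_sub (by omega)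
    (ht.imp fun a b hab => ((hG a b).mp hab).2)
end
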